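/- arXiv:0908.0157 — 11 statements merged into one kernel-verified Lean document; each statement's English description precedes it below -/
import Mathlib

section
/- For n ≥ 3 and A a positive rational, the radical A^(1/n) is irreducible if and only if for every natural number k with 2 ≤ k ≤ n-1, the real number (A^k)^(1/n) is irrational. (Proposition 2.1) -/
def IrredRad (A : ℚ) (n : ℕ) : Prop :=
  ¬ ∃ (m : ℕ) (B : ℚ), 1 ≤ m ∧ m < n ∧ 0 < B ∧
    (A : ℝ) ^ ((1 : ℝ) / n) = (B : ℝ) ^ ((1 : ℝ) / m)
theorem stmt_1 (A : ℚ) (hA : 0 < A) (n : ℕ) (hn : 3 ≤ n) :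
    IrredRad A n ↔
      ∀ k : ℕ, 2 ≤ k → k ≤ n - 1 →
        Irrational (((A ^ k : ℚ) : ℝ) ^ ((1 : ℝ) / n)) := by
  have hA' : (0:ℝ) < (A:ℝ) := by exact_mod_cast hA
  set α : ℝ := (A : ℝ) ^ ((1:ℝ)/n) with hαdef
  have hαpos : 0 < α := Real.rpow_pos_of_pos hA' _
  have hnne : (n:ℝ) ≠ 0 := by
    have : 0 < n := by omega
    exact_mod_cast this.ne'
  have hαn : α ^ n = (A:ℝ) := by
    rw [hαdef, ← Real.rpow_natCast ((A:ℝ) ^ ((1:ℝ)/n)) n, ← Real.rpow_mul hA'.le,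
      one_div, inv_mul_cancel₀ hnne, Real.rpow_one]
  have hpowk : ∀ k : ℕ, ((A ^ k : ℚ) : ℝ) ^ ((1:ℝ)/n) = α ^ k := by
    intro k
    have : ((A ^ k : ℚ) : ℝ) = (A:ℝ) ^ (k:ℝ) := by
      push_cast
      rw [Real.rpow_natCast]
    rw [this, ← Real.rpow_mul hA'.le, mul_comm, Real.rpow_mul hA'.le, Real.rpow_natCast,
      hαdef]
  constructor
  · intro hirr k hk2 hkn
    rw [hpowk k]
    by_contra hcon
    simp only [Irrational, not_not, Set.mem_range] at hcon
    obtain ⟨q, hq⟩ := hcon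
    have hqpos : 0 < q := by
      have : (0:ℝ) < (q:ℝ) := hq ▸ pow_pos hαpos k
      exact_mod_cast this
    set d := Nat.gcd n k with hddef
    have hd1 : 1 ≤ d := Nat.gcd_pos_of_pos_right n (by omega)
    have hdn : d < n := lt_of_le_of_lt (Nat.le_of_dvd (by omega) (Nat.gcd_dvd_right n k))
      (by omega)
    set u := Nat.gcdA n k with hudef
    set v := Nat.gcdB n k with hvdef
    have hb : (d:ℤ) = n * u + k * v := Nat.gcd_eq_gcd_ab n k
    have hzd : α ^ (d:ℤ) = (A:ℝ) ^ u * (q:ℝ) ^ v := by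
      calc α ^ (d:ℤ) = α ^ ((n:ℤ) * u + (k:ℤ) * v) := by rw [← hb]
        _ = (α ^ (n:ℤ)) ^ u * (α ^ (k:ℤ)) ^ v := by
            rw [zpow_add₀ hαpos.ne', zpow_mul, zpow_mul]
        _ = (A:ℝ) ^ u * (q:ℝ) ^ v := by
            rw [zpow_natCast, zpow_natCast, hαn, hq]
    set B : ℚ := A ^ u * q ^ v with hBdef
    have hBpos : 0 < B := mul_pos (zpow_pos hA u) (zpow_pos hqpos v)
    have hBcast : (B:ℝ) = α ^ d := by
      rw [hBdef]
      push_cast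
      rw [← hzd, zpow_natCast]
    apply hirr
    refine ⟨d, B, hd1, hdn, hBpos, ?_⟩
    rw [hBcast, ← Real.rpow_natCast α d, ← Real.rpow_mul hαpos.le,
      mul_one_div_cancel (Nat.cast_ne_zero.mpr (by omega) : (d:ℝ) ≠ 0), Real.rpow_one, hαdef]
  · rintro h ⟨m, B, hm1, hmn, hBpos, heq⟩
    have hB' : (0:ℝ) < (B:ℝ) := by exact_mod_cast hBpos
    have key : ∀ (k : ℕ) (C : ℚ), 2 ≤ k → k ≤ n - 1 → α ^ k ≠ (C:ℝ) := by
      intro k C hk2 hkn hc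
      exact (hpowk k ▸ h k hk2 hkn) ⟨C, hc.symm⟩
    have hαm : α ^ m = (B:ℝ) := by
      rw [← hαdef] at heq
      rw [heq, ← Real.rpow_natCast ((B:ℝ) ^ ((1:ℝ)/m)) m, ← Real.rpow_mul hB'.le,
        one_div, inv_mul_cancel₀ (Nat.cast_ne_zero.mpr (by omega) : (m:ℝ) ≠ 0), Real.rpow_one]
    rcases Nat.lt_or_ge m 2 with hm | hm
    · -- m = 1
      have hm1' : m = 1 := by omega
      have hα : α = (B:ℝ) := by simpa [hm1'] using hαm
      have : α ^ 2 = ((B ^ 2 : ℚ) : ℝ) := by rw [hα]; push_cast; ring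
      exact key 2 (B ^ 2) le_rfl (by omega) this
    · exact key m B hm (by omega) hαm
end

section
/- If A, B are positive rationals, m, n are natural numbers greater than 1, A^(1/n) = B^(1/m) as real numbers, and B^(1/m) is an irreducible radical, then m divides n and A = B^(n/m). (Proposition 2.2) -/
lemma exists_common_root (A B : ℚ) (hA : 0 < A) (hB : 0 < B) (m₁ n₁ : ℕ)
    (hco : Nat.Coprime m₁ n₁) (h : A ^ m₁ = B ^ n₁) :
    ∃ C : ℚ, 0 < C ∧ A = C ^ n₁ ∧ B = C ^ m₁ := by
  have hA0 : A ≠ 0 := hA.ne'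
  have hB0 : B ≠ 0 := hB.ne'
  have hbez : (1 : ℤ) = m₁ * Nat.gcdA m₁ n₁ + n₁ * Nat.gcdB m₁ n₁ := by
    have := Nat.gcd_eq_gcd_ab m₁ n₁
    rw [hco] at this
    exact_mod_cast this
  set a := Nat.gcdA m₁ n₁
  set b := Nat.gcdB m₁ n₁
  have hz : A ^ (m₁ : ℤ) = B ^ (n₁ : ℤ) := by exact_mod_cast h
  refine ⟨A ^ b * B ^ a, ?_, ?_, ?_⟩
  · positivity
  · have e1 : (A ^ b * B ^ a) ^ (n₁ : ℤ) = A := by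
      have step : (A ^ b * B ^ a) ^ (n₁ : ℤ)
          = A ^ (b * (n₁ : ℤ)) * (B ^ (n₁ : ℤ)) ^ a := by
        rw [mul_zpow]
        congr 1
        · rw [← zpow_mul]
        · rw [← zpow_mul, ← zpow_mul, mul_comm]
      rw [step, ← hz, ← zpow_mul, ← zpow_add₀ hA0,
        show b * (n₁ : ℤ) + (m₁ : ℤ) * a = 1 from by rw [hbez]; ring, zpow_one]
    rw [← zpow_natCast]
    exact e1.symm
  · have e2 : (A ^ b * B ^ a) ^ (m₁ : ℤ) = B := by
      have step : (A ^ b * B ^ a) ^ (m₁ : ℤ)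
          = (A ^ (m₁ : ℤ)) ^ b * B ^ (a * (m₁ : ℤ)) := by
        rw [mul_zpow]
        congr 1
        · rw [← zpow_mul, ← zpow_mul, mul_comm]
        · rw [← zpow_mul]
      rw [step, hz, ← zpow_mul, ← zpow_add₀ hB0,
        show (n₁ : ℤ) * b + a * (m₁ : ℤ) = 1 from by rw [hbez]; ring, zpow_one]
    rw [← zpow_natCast]
    exact e2.symm

theorem stmt_2 (A B : ℚ) (hA : 0 < A) (hB : 0 < B) (m n : ℕ)
    (hm : 1 < m) (hn : 1 < n)
    (heq : (A : ℝ) ^ ((1 : ℝ) / n) = (B : ℝ) ^ ((1 : ℝ) / m))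
    (hirr : IrredRad B m) :
    m ∣ n ∧ A = B ^ (n / m) := by
  have hAr : (0:ℝ) ≤ (A:ℝ) := by exact_mod_cast hA.le
  have hBr : (0:ℝ) ≤ (B:ℝ) := by exact_mod_cast hB.le
  have hm0 : (m:ℝ) ≠ 0 := by positivity
  have hn0 : (n:ℝ) ≠ 0 := by positivity
  have h1 : (A:ℝ) ^ (m:ℝ) = (B:ℝ) ^ (n:ℝ) := by
    calc (A:ℝ) ^ (m:ℝ) = ((A:ℝ) ^ ((1:ℝ)/n)) ^ ((n*m : ℝ)) := by
          rw [← Real.rpow_mul hAr]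
          congr 1
          field_simp
    _ = ((B:ℝ) ^ ((1:ℝ)/m)) ^ ((n*m:ℝ)) := by rw [heq]
    _ = (B:ℝ) ^ (n:ℝ) := by
          rw [← Real.rpow_mul hBr]
          congr 1
          field_simp
  have hpow : A ^ m = B ^ n := by
    have : ((A ^ m : ℚ) : ℝ) = ((B ^ n : ℚ) : ℝ) := by
      push_cast
      rw [← Real.rpow_natCast (A:ℝ), ← Real.rpow_natCast (B:ℝ)]
      exact h1
    exact_mod_cast this
  set d := Nat.gcd m n with hd_def
  have hmpos : 0 < m := by omega
  have hnpos : 0 < n := by omega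
  have hdpos : 0 < d := Nat.gcd_pos_of_pos_left n hmpos
  set m₁ := m / d with hm1_def
  set n₁ := n / d with hn1_def
  have hm_eq : m = d * m₁ := (Nat.div_mul_cancel (Nat.gcd_dvd_left m n)).symm.trans (mul_comm _ _)
  have hn_eq : n = d * n₁ := (Nat.div_mul_cancel (Nat.gcd_dvd_right m n)).symm.trans (mul_comm _ _)
  have hco : Nat.Coprime m₁ n₁ := Nat.coprime_div_gcd_div_gcd hdpos
  have hm1pos : 0 < m₁ := Nat.div_pos (Nat.le_of_dvd hmpos (Nat.gcd_dvd_left m n)) hdpos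
  have hn1pos : 0 < n₁ := Nat.div_pos (Nat.le_of_dvd hnpos (Nat.gcd_dvd_right m n)) hdpos
  have hpow1 : A ^ m₁ = B ^ n₁ := by
    have hkey : (A ^ m₁) ^ d = (B ^ n₁) ^ d := by
      rw [← pow_mul, ← pow_mul, mul_comm m₁ d, mul_comm n₁ d, ← hm_eq, ← hn_eq, hpow]
    exact (pow_left_strictMonoOn₀ hdpos.ne').injOn (Set.mem_Ici.mpr (by positivity))
      (Set.mem_Ici.mpr (by positivity)) hkey
  obtain ⟨C, hC, hAC, hBC⟩ := exists_common_root A B hA hB m₁ n₁ hco hpow1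
  have hCr : (0:ℝ) ≤ (C:ℝ) := by exact_mod_cast hC.le
  have hdvd : m ∣ n := by
    by_contra hnd
    have hdne : d ≠ m := by
      intro h
      exact hnd (h ▸ Nat.gcd_dvd_right m n)
    have hdlt : d < m := lt_of_le_of_ne (Nat.le_of_dvd hmpos (Nat.gcd_dvd_left m n)) hdne
    apply hirr
    refine ⟨d, C, hdpos, hdlt, hC, ?_⟩
    have hBCr : (B:ℝ) = (C:ℝ) ^ (m₁:ℕ) := by exact_mod_cast congrArg (fun q : ℚ => (q:ℝ)) hBC
    rw [hBCr, ← Real.rpow_natCast (C:ℝ) m₁, ← Real.rpow_mul hCr]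
    congr 1
    have hme : (m:ℝ) = (d:ℝ) * (m₁:ℝ) := by exact_mod_cast hm_eq
    have hd0 : (d:ℝ) ≠ 0 := by positivity
    have hm10 : (m₁:ℝ) ≠ 0 := by positivity
    rw [hme]
    field_simp
  refine ⟨hdvd, ?_⟩
  have hkey : A ^ m = (B ^ (n / m)) ^ m := by
    rw [← pow_mul, Nat.div_mul_cancel hdvd, hpow]
  exact (pow_left_strictMonoOn₀ hmpos.ne').injOn (Set.mem_Ici.mpr (by positivity))
    (Set.mem_Ici.mpr (by positivity)) hkey
end

section
/- If A is a positive rational, n ≥ 2, and A^(1/n) is an irreducible radical, then A^(1/n) is not a root of any nonzero polynomial with rational coefficients of degree strictly less than n. (Theorem 2.1) -/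
open Polynomial

theorem stmt_4 (A : ℚ) (hA : 0 < A) (n : ℕ) (hn : 2 ≤ n)
    (hirr : IrredRad A n) (p : Polynomial ℚ) (hp : p ≠ 0)
    (hdeg : p.degree < (n : WithBot ℕ)) :
    Polynomial.aeval ((A : ℝ) ^ ((1 : ℝ) / n)) p ≠ 0 := by
  unfold IrredRad at hirr
  set α : ℝ := (A : ℝ) ^ ((1 : ℝ) / n) with hα
  have hApos : (0:ℝ) < (A:ℝ) := by exact_mod_cast hA
  have hαpos : 0 < α := Real.rpow_pos_of_pos hApos _
  have hn0 : n ≠ 0 := by omega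
  have hαn : α ^ n = (A : ℝ) := by
    rw [hα, ← Real.rpow_natCast (_ ^ _) n, ← Real.rpow_mul hApos.le]
    rw [one_div, inv_mul_cancel₀ (by exact_mod_cast hn0), Real.rpow_one]
  -- α is a root of X^n - C A
  have hroot : aeval α (X ^ n - C A : ℚ[X]) = 0 := by
    simp [hαn]
  have hint : IsIntegral ℚ α :=
    ⟨X ^ n - C A, monic_X_pow_sub_C _ hn0, by simpa using hroot⟩
  intro hpev
  set q : ℚ[X] := minpoly ℚ α with hq
  have hq0 : q ≠ 0 := minpoly.ne_zero hint
  have hqdvd : q ∣ X ^ n - C A := minpoly.dvd ℚ α hroot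
  have hqp : q ∣ p := minpoly.dvd ℚ α hpev
  set d : ℕ := q.natDegree with hd
  have hd1 : 1 ≤ d := minpoly.natDegree_pos hint
  have hdn : d < n := by
    have h1 : q.degree ≤ p.degree := degree_le_of_dvd hqp hp
    have : q.degree < (n : WithBot ℕ) := lt_of_le_of_lt h1 hdeg
    exact natDegree_lt_iff_degree_lt hq0 |>.mpr (by exact_mod_cast this)
  -- complex roots
  set q' : ℂ[X] := q.map (algebraMap ℚ ℂ) with hq'
  have hq'0 : q' ≠ 0 := (Polynomial.map_ne_zero_iff (algebraMap ℚ ℂ).injective).mpr hq0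
  have hmonic : q'.Monic := (minpoly.monic hint).map _
  have hsplit : q'.Splits := IsAlgClosed.splits q'
  have hcard : q'.roots.card = d := by
    rw [(splits_iff_card_roots).mp hsplit, hq', natDegree_map]
  -- each root has modulus α
  have hmod : ∀ z ∈ q'.roots, ‖z‖ = α := by
    intro z hz
    have hz0 : q'.eval z = 0 := (mem_roots hq'0).mp hz
    have hdvd' : q' ∣ (X ^ n - C (A:ℂ)) := by
      have := Polynomial.map_dvd (algebraMap ℚ ℂ) hqdvd
      simpa [Polynomial.map_sub, Polynomial.map_pow] using this
    have hzn : z ^ n = (A : ℂ) := by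
      obtain ⟨r, hr⟩ := hdvd'
      have : (X ^ n - C (A:ℂ)).eval z = 0 := by rw [hr]; simp [hz0]
      simpa [sub_eq_zero] using this
    have habs : ‖z‖ ^ n = (A : ℝ) := by
      rw [← norm_pow, hzn]
      simpa using Complex.norm_of_nonneg hApos.le
    have h2 : ‖z‖ ^ n = α ^ n := by rw [habs, hαn]
    calc ‖z‖ = (‖z‖ ^ n) ^ ((n:ℝ)⁻¹) :=
          (Real.pow_rpow_inv_natCast (norm_nonneg z) hn0).symm
      _ = (α ^ n) ^ ((n:ℝ)⁻¹) := by rw [h2]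
      _ = α := Real.pow_rpow_inv_natCast hαpos.le hn0
  -- product of roots
  have hprod : q' = (q'.roots.map (fun r => X - C r)).prod :=
    hsplit.eq_prod_roots_of_monic hmonic
  have hev : ‖q'.eval 0‖ = α ^ d := by
    rw [hprod, eval_multiset_prod, (by intro s; exact map_multiset_prod (normHom (α := ℂ)) s : ∀ s : Multiset ℂ, ‖s.prod‖ = (s.map (fun x => ‖x‖)).prod), Multiset.map_map, Multiset.map_map]
    simp only [Function.comp_def, eval_sub, eval_X, eval_C, zero_sub, norm_neg]
    have hall : ∀ x ∈ q'.roots.map (fun r => ‖r‖), x = α := by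
      intro x hx
      obtain ⟨r, hr, rfl⟩ := Multiset.mem_map.mp hx
      exact hmod r hr
    rw [Multiset.eq_replicate_card.2 hall, Multiset.prod_replicate, Multiset.card_map, hcard]

  set c : ℚ := q.coeff 0 with hc
  have hcval : (|c| : ℝ) = α ^ d := by
    have h1 : q'.eval 0 = ((c : ℝ) : ℂ) := by
      rw [← coeff_zero_eq_eval_zero, hq', coeff_map]
      simp [hc]
    rw [← hev, h1, Complex.norm_real, Real.norm_eq_abs]
  have hBpos : 0 < |c| := by
    have : (0:ℝ) < (|c| : ℝ) := by rw [hcval]; positivity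
    exact_mod_cast this
  have hd0 : d ≠ 0 := by omega
  exact hirr ⟨d, |c|, hd1, hdn, hBpos, by
    rw [one_div, Rat.cast_abs, hcval, Real.pow_rpow_inv_natCast hαpos.le hd0]⟩
end

section
/- Let d(X) be a monic polynomial with rational coefficients of degree k with 1 ≤ k, dividing X^n − A (A a positive rational). Then the absolute value of the constant coefficient of d equals A^(k/n) (the positive real number). -/
open Polynomial

theorem stmt_6 (A : ℚ) (hA : 0 < A) (n : ℕ) (hn : 1 ≤ n)
    (d : Polynomial ℚ) (hmonic : d.Monic) (k : ℕ) (hk : d.natDegree = k)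
    (hk1 : 1 ≤ k) (hdvd : d ∣ Polynomial.X ^ n - Polynomial.C A) :
    |(d.coeff 0 : ℝ)| = (A : ℝ) ^ ((k : ℝ) / n) := by
  have hn0 : (n : ℝ) ≠ 0 := by
    have : 0 < n := hn
    exact_mod_cast this.ne'
  set D := d.map (algebraMap ℚ ℂ) with hDdef
  have hDmonic : D.Monic := hmonic.map _
  have hsplit : D.Splits := IsAlgClosed.splits _
  have hdeg : D.natDegree = k := by
    rw [Polynomial.natDegree_map, hk]
  have hcard : D.roots.card = k := by
    rw [← hdeg]
    exact (Polynomial.splits_iff_card_roots.mp hsplit)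
  have hroot : ∀ z ∈ D.roots, ‖z‖ = (A : ℝ) ^ ((1 : ℝ) / n) := by
    intro z hz
    have hz0 : D.eval z = 0 := by
      have := Polynomial.isRoot_of_mem_roots hz
      exact this
    have hDdvd : D ∣ (X ^ n - C (A : ℂ)) := by
      have := Polynomial.map_dvd (algebraMap ℚ ℂ) hdvd
      simpa [Polynomial.map_sub, Polynomial.map_pow] using this
    have hzn : z ^ n = (A : ℂ) := by
      obtain ⟨c, hc⟩ := hDdvd
      have : (X ^ n - C (A : ℂ)).eval z = 0 := by
        rw [hc, Polynomial.eval_mul, hz0, zero_mul]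
      simpa [sub_eq_zero] using this
    have habs : ‖z‖ ^ n = (A : ℝ) := by
      have := congrArg (‖·‖) hzn
      rw [norm_pow] at this
      rw [this]
      rw [show ((A : ℚ) : ℂ) = ((A : ℝ) : ℂ) by push_cast; ring]
      rw [Complex.norm_real, Real.norm_eq_abs, abs_of_pos (by exact_mod_cast hA)]
    have hnn : (0:ℝ) ≤ ‖z‖ := (norm_nonneg z)
    rw [← habs, ← Real.rpow_natCast ‖z‖ n, ← Real.rpow_mul hnn]
    rw [mul_one_div, div_self hn0, Real.rpow_one]
  have hprod := hsplit.eq_prod_roots_of_monic hDmonic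
  have hcoeff : (d.coeff 0 : ℂ) = D.coeff 0 := by
    simp [hDdef, Polynomial.coeff_map]
  have heval : ‖D.coeff 0‖ = ((A : ℝ) ^ ((1 : ℝ) / n)) ^ k := by
    have h0 : D.coeff 0 = D.eval 0 := Polynomial.coeff_zero_eq_eval_zero D
    rw [h0, hprod, Polynomial.eval_multiset_prod, Multiset.map_map, show ∀ m : Multiset ℂ, ‖m.prod‖ = (m.map (‖·‖)).prod from
        fun m => map_multiset_prod (normHom : ℂ →*₀ ℝ) m,
      Multiset.map_map]
    simp only [Function.comp, eval_sub, eval_X, eval_C, zero_sub, norm_neg]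
    rw [Multiset.map_congr rfl hroot, Multiset.map_const', Multiset.prod_replicate, hcard]
  have habs0 : |(d.coeff 0 : ℝ)| = ‖D.coeff 0‖ := by
    rw [← hcoeff]
    rw [show ((d.coeff 0 : ℚ) : ℂ) = (((d.coeff 0 : ℚ) : ℝ) : ℂ) by push_cast; ring]
    rw [Complex.norm_real, Real.norm_eq_abs]
  rw [habs0, heval, ← Real.rpow_natCast _ k, ← Real.rpow_mul (by positivity)]
  rw [one_div, inv_mul_eq_div]
end

section
/- If a, b, c, d, f, g are rationals with c, g positive, m, n naturals greater than 1, both c^(1/m) and g^(1/n) irreducible radicals, b ≠ 0, f ≠ 0, and a + b·c^(1/m) = d + f·g^(1/n) as real numbers, then m = n, a = d, and b·c^(1/n) = f·g^(1/n). (Consequence 3.1) -/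
open Polynomial

lemma irred_minpoly_natDegree {c : ℚ} (hc : 0 < c) {m : ℕ} (hm : 1 ≤ m) (h : IrredRad c m) :
    (minpoly ℚ ((c : ℝ) ^ ((1 : ℝ) / m))).natDegree = m := by
  have hm0 : m ≠ 0 := by omega
  set α : ℝ := (c : ℝ) ^ ((1 : ℝ) / m) with hαdef
  have hcR : (0:ℝ) < (c:ℝ) := by exact_mod_cast hc
  have hαpos : 0 < α := Real.rpow_pos_of_pos hcR _
  have hαm : α ^ m = (c : ℝ) := by
    rw [hαdef, one_div, Real.rpow_inv_natCast_pow hcR.le hm0]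
  have haev : (aeval α) (X ^ m - C c) = 0 := by
    simp [hαm]
  have hint : IsIntegral ℚ α := ⟨X ^ m - C c, monic_X_pow_sub_C c hm0, haev⟩
  set p := minpoly ℚ α with hp
  have hpmonic : p.Monic := minpoly.monic hint
  have hdvd : p ∣ X ^ m - C c := minpoly.dvd ℚ α haev
  set d := p.natDegree with hd
  have hd1 : 1 ≤ d := minpoly.natDegree_pos hint
  have hdm : d ≤ m := by
    have : (X ^ m - C c : ℚ[X]).natDegree = m := natDegree_X_pow_sub_C
    exact this ▸ natDegree_le_of_dvd hdvd (monic_X_pow_sub_C c hm0).ne_zero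
  rcases eq_or_lt_of_le hdm with hEq | hlt
  · exact hEq
  exfalso
  -- complex roots
  set P := p.map (algebraMap ℚ ℂ) with hP
  have hPmonic : P.Monic := hpmonic.map _
  have hPdeg : P.natDegree = d := natDegree_map _
  have hsplits : P.Splits := IsAlgClosed.splits P
  have hcard : P.roots.card = d := by
    rw [← hPdeg]; exact (splits_iff_card_roots.mp hsplits)
  have hrootabs : ∀ z ∈ P.roots, ‖z‖ = α := by
    intro z hz
    have hzr : P.IsRoot z := isRoot_of_mem_roots hz
    have hdvd' : P ∣ (X ^ m - C (c:ℂ)) := by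
      have := Polynomial.map_dvd (algebraMap ℚ ℂ) hdvd
      simpa [Polynomial.map_sub, Polynomial.map_pow] using this
    have hzm : z ^ m = (c : ℂ) := by
      obtain ⟨q, hq⟩ := hdvd'
      have : (X ^ m - C (c:ℂ)).eval z = 0 := by
        rw [hq, eval_mul, show eval z P = 0 from hzr, zero_mul]
      simpa [sub_eq_zero] using this
    have habs : ‖z‖ ^ m = (c : ℝ) := by
      have := congrArg (‖·‖) hzm
      rw [norm_pow] at this
      rw [this, show ((c:ℂ)) = ((c:ℝ):ℂ) by push_cast; ring, Complex.norm_real,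
        Real.norm_eq_abs, abs_of_pos hcR]
    calc ‖z‖ = (‖z‖ ^ m) ^ ((m : ℝ)⁻¹) := by
          rw [Real.pow_rpow_inv_natCast (norm_nonneg z) hm0]
      _ = α := by rw [habs, hαdef, one_div]
  have hcoeff0 : P.coeff 0 = (-1) ^ d * P.roots.prod := by
    rw [hsplits.coeff_zero_eq_prod_roots_of_monic hPmonic, hPdeg]
  have habs0 : ‖P.coeff 0‖ = α ^ d := by
    rw [hcoeff0, norm_mul, norm_pow, norm_neg, norm_one, one_pow, one_mul]
    rw [show ‖P.roots.prod‖ = (P.roots.map (fun z : ℂ => ‖z‖)).prod from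
      map_multiset_prod (normHom : ℂ →*₀ ℝ) P.roots]
    have hrep : Multiset.map (fun z : ℂ => ‖z‖) P.roots = Multiset.replicate d α := by
      apply Multiset.eq_replicate.mpr
      refine ⟨by rw [Multiset.card_map, hcard], ?_⟩
      intro x hx
      obtain ⟨z, hz, rfl⟩ := Multiset.mem_map.mp hx
      exact hrootabs z hz
    rw [hrep, Multiset.prod_replicate]
  set B : ℚ := |p.coeff 0| with hB
  have hBR : (B : ℝ) = α ^ d := by
    have : ‖((p.coeff 0 : ℚ) : ℂ)‖ = |((p.coeff 0 : ℚ) : ℝ)| := by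
      rw [show ((p.coeff 0 : ℚ) : ℂ) = (((p.coeff 0 : ℚ) : ℝ) : ℂ) by push_cast; ring,
        Complex.norm_real, Real.norm_eq_abs]
    rw [hB]
    push_cast
    rw [← this]
    have : P.coeff 0 = ((p.coeff 0 : ℚ) : ℂ) := by simp [hP]
    rw [← this, habs0]
  have hBpos : 0 < B := by
    have : (0:ℝ) < (B:ℝ) := hBR ▸ pow_pos hαpos d
    exact_mod_cast this
  apply h
  refine ⟨d, B, hd1, hlt, hBpos, ?_⟩
  rw [← hαdef, one_div, hBR, Real.pow_rpow_inv_natCast hαpos.le (by omega)]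

open IntermediateField
theorem stmt_7 (a b c d f g : ℚ) (hc : 0 < c) (hg : 0 < g)
    (m n : ℕ) (hm : 1 < m) (hn : 1 < n)
    (hcirr : IrredRad c m) (hgirr : IrredRad g n)
    (hb : b ≠ 0) (hf : f ≠ 0)
    (heq : (a : ℝ) + b * (c : ℝ) ^ ((1 : ℝ) / m)
         = (d : ℝ) + f * (g : ℝ) ^ ((1 : ℝ) / n)) :
    m = n ∧ a = d ∧
      (b : ℝ) * (c : ℝ) ^ ((1 : ℝ) / n) = (f : ℝ) * (g : ℝ) ^ ((1 : ℝ) / n) := by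
  have hm0 : m ≠ 0 := by omega
  have hn0 : n ≠ 0 := by omega
  set α : ℝ := (c : ℝ) ^ ((1 : ℝ) / m) with hαdef
  set β : ℝ := (g : ℝ) ^ ((1 : ℝ) / n) with hβdef
  have hcR : (0:ℝ) < (c:ℝ) := by exact_mod_cast hc
  have hgR : (0:ℝ) < (g:ℝ) := by exact_mod_cast hg
  have hαm : α ^ m = (c : ℝ) := by
    rw [hαdef, one_div, Real.rpow_inv_natCast_pow hcR.le hm0]
  have hβn : β ^ n = (g : ℝ) := by
    rw [hβdef, one_div, Real.rpow_inv_natCast_pow hgR.le hn0]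
  have haevα : (Polynomial.aeval α) (Polynomial.X ^ m - Polynomial.C c) = 0 := by simp [hαm]
  have haevβ : (Polynomial.aeval β) (Polynomial.X ^ n - Polynomial.C g) = 0 := by simp [hβn]
  have hintα : IsIntegral ℚ α := ⟨_, monic_X_pow_sub_C c hm0, haevα⟩
  have hintβ : IsIntegral ℚ β := ⟨_, monic_X_pow_sub_C g hn0, haevβ⟩
  have hdegα : (minpoly ℚ α).natDegree = m := irred_minpoly_natDegree hc hm.le hcirr
  have hdegβ : (minpoly ℚ β).natDegree = n := irred_minpoly_natDegree hg hn.le hgirr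
  have hbR : (b:ℝ) ≠ 0 := by exact_mod_cast hb
  have hfR : (f:ℝ) ≠ 0 := by exact_mod_cast hf
  set q' : ℚ := (d - a) / b with hq'def
  set r' : ℚ := f / b with hr'def
  have hr'0 : r' ≠ 0 := div_ne_zero hf hb
  have hr'R : ((r':ℚ):ℝ) ≠ 0 := by exact_mod_cast hr'0
  have hlin : α = (q' : ℝ) + (r' : ℝ) * β := by
    rw [hq'def, hr'def]
    push_cast
    field_simp
    linarith [heq]
  -- m = n
  have hmemα : α ∈ ℚ⟮β⟯ := by
    rw [hlin]
    exact add_mem (SubfieldClass.ratCast_mem _ q')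
      (mul_mem (SubfieldClass.ratCast_mem _ r') (mem_adjoin_simple_self ℚ β))
  have hmemβ : β ∈ ℚ⟮α⟯ := by
    have : β = ((r' : ℝ))⁻¹ * (α - (q' : ℝ)) := by
      rw [hlin]; field_simp; ring
    rw [this]
    exact mul_mem (inv_mem (SubfieldClass.ratCast_mem _ r'))
      (sub_mem (mem_adjoin_simple_self ℚ α) (SubfieldClass.ratCast_mem _ q'))
  have hfeq : ℚ⟮α⟯ = ℚ⟮β⟯ :=
    le_antisymm (adjoin_simple_le_iff.mpr hmemα) (adjoin_simple_le_iff.mpr hmemβ)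
  have hmn : m = n := by
    have h1 : Module.finrank ℚ ℚ⟮α⟯ = m := by rw [adjoin.finrank hintα, hdegα]
    have h2 : Module.finrank ℚ ℚ⟮β⟯ = n := by rw [adjoin.finrank hintβ, hdegβ]
    rw [← h1, ← h2, hfeq]
  subst hmn
  refine ⟨rfl, ?_⟩
  -- minpoly β = X^m - g
  have hmpβ : minpoly ℚ β = Polynomial.X ^ m - Polynomial.C g := by
    apply Polynomial.eq_of_monic_of_associated (minpoly.monic hintβ) (monic_X_pow_sub_C g hm0)
    apply Polynomial.associated_of_dvd_of_natDegree_le (minpoly.dvd ℚ β haevβ)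
      (monic_X_pow_sub_C g hm0).ne_zero
    rw [Polynomial.natDegree_X_pow_sub_C, hdegβ]
  -- the shifted polynomial
  set s : ℚ := q' / r' with hsdef
  have hPβ : (Polynomial.aeval β)
      ((Polynomial.X + Polynomial.C s) ^ m - Polynomial.C (c / r' ^ m)) = 0 := by
    have hβs : β + (s : ℝ) = α / (r' : ℝ) := by
      rw [hlin, hsdef]; push_cast; field_simp; ring
    simp only [map_sub, map_pow, map_add, Polynomial.aeval_X, Polynomial.aeval_C]
    have hC : (algebraMap ℚ ℝ) s = (s : ℝ) := eq_ratCast _ _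
    have hC2 : (algebraMap ℚ ℝ) (c / r' ^ m) = (c : ℝ) / (r' : ℝ) ^ m := by
      rw [eq_ratCast]; push_cast; ring
    rw [hC, hC2, hβs, div_pow, hαm]
    push_cast
    ring
  have hdvd2 : minpoly ℚ β ∣ (Polynomial.X + Polynomial.C s) ^ m - Polynomial.C (c / r' ^ m) :=
    minpoly.dvd ℚ β hPβ
  have hmon2 : ((Polynomial.X + Polynomial.C s) ^ m
      - Polynomial.C (c / r' ^ m) : ℚ[X]).Monic := by
    have h1 : ((Polynomial.X + Polynomial.C s : ℚ[X]) ^ m).Monic :=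
      (Polynomial.monic_X_add_C s).pow m
    have hd : (Polynomial.C (c / r' ^ m) : ℚ[X]).degree
        < ((Polynomial.X + Polynomial.C s : ℚ[X]) ^ m).degree := by
      apply lt_of_le_of_lt (Polynomial.degree_C_le)
      rw [Polynomial.degree_pow, Polynomial.degree_X_add_C]
      simpa using (by omega : 0 < m)
    exact h1.sub_of_left hd
  have hpeq : Polynomial.X ^ m - Polynomial.C g
      = (Polynomial.X + Polynomial.C s) ^ m - Polynomial.C (c / r' ^ m) := by
    rw [← hmpβ]
    apply Polynomial.eq_of_monic_of_associated (minpoly.monic hintβ) hmon2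
    apply Polynomial.associated_of_dvd_of_natDegree_le hdvd2 hmon2.ne_zero
    rw [hdegβ]
    calc ((Polynomial.X + Polynomial.C s) ^ m - Polynomial.C (c / r' ^ m) : ℚ[X]).natDegree
        ≤ max (((Polynomial.X + Polynomial.C s) ^ m : ℚ[X]).natDegree)
          ((Polynomial.C (c / r' ^ m) : ℚ[X]).natDegree) := Polynomial.natDegree_sub_le _ _
      _ ≤ m := by
          rw [Polynomial.natDegree_pow, Polynomial.natDegree_X_add_C, Polynomial.natDegree_C]
          omega
  -- compare coefficients at m - 1
  have hs0 : s = 0 := by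
    have hco := congrArg (fun P => Polynomial.coeff P (m - 1)) hpeq
    simp only [Polynomial.coeff_sub, Polynomial.coeff_X_pow, Polynomial.coeff_X_add_C_pow,
      Polynomial.coeff_C, if_neg (by omega : ¬ m - 1 = m), if_neg (by omega : ¬ m - 1 = 0)] at hco
    rw [show m - (m - 1) = 1 by omega] at hco
    have hch : m.choose (m - 1) = m := by
      rw [← Nat.choose_symm (by omega : m - 1 ≤ m), show m - (m - 1) = 1 by omega,
        Nat.choose_one_right]
    rw [hch] at hco
    have : s * (m : ℚ) = 0 := by
      rw [pow_one] at hco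
      linarith [hco]
    rcases mul_eq_zero.mp this with h | h
    · exact h
    · exact absurd (Nat.cast_eq_zero.mp h) hm0
  have hq'0 : q' = 0 := by
    have := hsdef ▸ hs0
    field_simp at this
    simpa using this
  have had : a = d := by
    rw [hq'def] at hq'0
    field_simp at hq'0
    linarith
  refine ⟨had, ?_⟩
  have : (a:ℝ) = (d:ℝ) := by exact_mod_cast had
  linarith [heq]
end

section
/- If a, b, c, d are rationals with b, d positive, m, n naturals greater than 1, both b^(1/m) and d^(1/n) irrational, and a + b^(1/m) = c + d^(1/n) as real numbers, then a = c and b^(1/m) = d^(1/n). (Consequence 3.2) -/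
open Polynomial

lemma key (q : ℚ) (hq : q ≠ 0) (β : ℝ) (hβ : 0 < β) (hirr : Irrational β)
    (d b : ℚ) (n m : ℕ) (hn : 0 < n) (hm : 0 < m)
    (hdb : β ^ n = (d : ℝ)) (hqβ : 0 < (q : ℝ) + β)
    (hbb : ((q : ℝ) + β) ^ m = (b : ℝ)) : False := by
  -- β is integral over ℚ
  have hβint : IsIntegral ℚ β := by
    refine ⟨X ^ n - C d, monic_X_pow_sub_C d hn.ne', ?_⟩
    simp [hdb, sub_eq_zero, Polynomial.eval₂_sub]
  set α : ℝ := (q : ℝ) + β with hα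
  have hαint : IsIntegral ℚ α := by
    refine ⟨X ^ m - C b, monic_X_pow_sub_C b hm.ne', ?_⟩
    simp [hbb, sub_eq_zero, Polynomial.eval₂_sub]
  -- work in ℂ
  set βc : ℂ := (β : ℂ) with hβc
  have hinj : Function.Injective (algebraMap ℝ ℂ) := (algebraMap ℝ ℂ).injective
  have hmin : minpoly ℚ βc = minpoly ℚ β := minpoly.algebraMap_eq hinj β
  set P : ℚ[X] := minpoly ℚ β with hP
  have hβcint : IsIntegral ℚ βc := hβint.map (IsScalarTower.toAlgHom ℚ ℝ ℂ)
  -- degree ≥ 2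
  have hdeg : 2 ≤ P.natDegree := by
    rw [minpoly.two_le_natDegree_iff hβint]
    rintro ⟨r, rfl⟩
    exact hirr ⟨r, rfl⟩
  -- P splits over ℂ, separable
  have hsep : P.Separable := (minpoly.irreducible hβint).separable
  have hroots : Fintype.card (P.rootSet ℂ) = P.natDegree :=
    card_rootSet_eq_natDegree hsep (IsAlgClosed.splits (P.map (algebraMap ℚ ℂ)))
  have hβmem : βc ∈ P.rootSet ℂ := by
    rw [mem_rootSet]
    refine ⟨minpoly.ne_zero hβint, ?_⟩
    rw [← hmin]
    exact minpoly.aeval ℚ βc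
  -- pick another root
  obtain ⟨⟨γ, hγmem⟩, hγne⟩ := Fintype.exists_ne_of_one_lt_card
    (by omega : 1 < Fintype.card (P.rootSet ℂ)) ⟨βc, hβmem⟩
  have hγroot : aeval γ P = 0 := (mem_rootSet.mp hγmem).2
  have hγneβ : γ ≠ βc := fun h => hγne (by simp [Subtype.ext_iff, h])
  -- γ ^ n = d
  have hdvd1 : P ∣ X ^ n - C d := minpoly.dvd ℚ β (by simp [hdb, sub_eq_zero])
  have hγn : γ ^ n = (d : ℂ) := by
    obtain ⟨R, hR⟩ := hdvd1
    have := congrArg (aeval γ) hR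
    simp [hγroot] at this
    linear_combination this
  -- γ + q is a root of minpoly of α
  have hdvd2 : P ∣ (minpoly ℚ α).comp (X + C q) := by
    apply minpoly.dvd
    rw [aeval_comp]
    have h0 : aeval β (X + C q) = α := by
      rw [hα]; simp [add_comm]
    rw [h0]
    exact minpoly.aeval ℚ α
  have hγα : aeval (γ + (q : ℂ)) (minpoly ℚ α) = 0 := by
    obtain ⟨R, hR⟩ := hdvd2
    have := congrArg (aeval γ) hR
    rw [aeval_comp] at this
    simp [hγroot] at this
    simpa using this
  have hdvd3 : minpoly ℚ α ∣ X ^ m - C b := minpoly.dvd ℚ α (by simp [hbb, sub_eq_zero])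
  have hγm : (γ + (q : ℂ)) ^ m = (b : ℂ) := by
    obtain ⟨R, hR⟩ := hdvd3
    have := congrArg (aeval (γ + (q : ℂ))) hR
    simp [hγα] at this
    linear_combination this
  -- norms
  have hnγ : ‖γ‖ = β := by
    have h1 : ‖γ‖ ^ n = β ^ n := by
      rw [← norm_pow, hγn, hdb]
      have : (0:ℝ) ≤ (d:ℝ) := by rw [← hdb]; positivity
      simpa [Complex.norm_real] using abs_of_nonneg this
    exact (pow_left_inj₀ (norm_nonneg _) hβ.le hn.ne').mp h1
  have hnγq : ‖γ + (q : ℂ)‖ = α := by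
    have h1 : ‖γ + (q : ℂ)‖ ^ m = α ^ m := by
      rw [← norm_pow, hγm, hα, hbb]
      have : (0:ℝ) ≤ (b:ℝ) := by rw [← hbb]; positivity
      simpa using abs_of_nonneg this
    exact (pow_left_inj₀ (norm_nonneg _) hqβ.le hm.ne').mp h1
  -- derive γ = βc
  have e1 : γ.re ^ 2 + γ.im ^ 2 = β ^ 2 := by
    have h := congrArg (· ^ 2) hnγ
    simp only [Complex.sq_norm, Complex.normSq_apply] at h
    rw [← h]; ring
  have e2 : (γ.re + (q:ℝ)) ^ 2 + γ.im ^ 2 = ((q:ℝ) + β) ^ 2 := by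
    have h := congrArg (· ^ 2) hnγq
    simp only [Complex.sq_norm, Complex.normSq_apply] at h
    rw [hα] at h
    have h3 : (γ + (q:ℂ)).re = γ.re + (q:ℝ) := by simp
    have h4 : (γ + (q:ℂ)).im = γ.im := by simp
    rw [h3, h4] at h
    rw [← h]; ring
  have hq' : (q : ℝ) ≠ 0 := by exact_mod_cast hq
  have h5 : (q:ℝ) * γ.re = (q:ℝ) * β := by linear_combination (e2 - e1) / 2
  have hre : γ.re = β := mul_left_cancel₀ hq' h5
  have him : γ.im = 0 := by
    have h6 : γ.im ^ 2 = 0 := by rw [hre] at e1; linarith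
    exact pow_eq_zero_iff (two_ne_zero) |>.mp h6
  exact hγneβ (Complex.ext (by simp [hre, hβc]) (by simp [him, hβc]))



theorem stmt_8 (a b c d : ℚ) (hb : 0 < b) (hd : 0 < d)
    (m n : ℕ) (hm : 1 < m) (hn : 1 < n)
    (hbirr : Irrational ((b : ℝ) ^ ((1 : ℝ) / m)))
    (hdirr : Irrational ((d : ℝ) ^ ((1 : ℝ) / n)))
    (heq : (a : ℝ) + (b : ℝ) ^ ((1 : ℝ) / m)
         = (c : ℝ) + (d : ℝ) ^ ((1 : ℝ) / n)) :
    a = c ∧ (b : ℝ) ^ ((1 : ℝ) / m) = (d : ℝ) ^ ((1 : ℝ) / n) := by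
  set β : ℝ := (d : ℝ) ^ ((1 : ℝ) / n) with hβdef
  set αr : ℝ := (b : ℝ) ^ ((1 : ℝ) / m) with hαdef
  have hdpos : (0:ℝ) < (d:ℝ) := by exact_mod_cast hd
  have hbpos : (0:ℝ) < (b:ℝ) := by exact_mod_cast hb
  have hβpos : 0 < β := Real.rpow_pos_of_pos hdpos _
  have hαpos : 0 < αr := Real.rpow_pos_of_pos hbpos _
  have hβn : β ^ n = (d : ℝ) := by
    rw [hβdef, ← Real.rpow_natCast (((d:ℝ)) ^ ((1:ℝ)/n)) n, ← Real.rpow_mul hdpos.le,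
      one_div_mul_cancel (by exact_mod_cast (by omega : n ≠ 0) : (n:ℝ) ≠ 0), Real.rpow_one]
  have hαm : αr ^ m = (b : ℝ) := by
    rw [hαdef, ← Real.rpow_natCast (((b:ℝ)) ^ ((1:ℝ)/m)) m, ← Real.rpow_mul hbpos.le,
      one_div_mul_cancel (by exact_mod_cast (by omega : m ≠ 0) : (m:ℝ) ≠ 0), Real.rpow_one]
  have hac : a = c := by
    by_contra hne
    have hq : c - a ≠ 0 := sub_ne_zero.mpr (fun h => hne h.symm)
    have hsum : ((c - a : ℚ) : ℝ) + β = αr := by push_cast; linarith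
    have hqβ : 0 < ((c - a : ℚ) : ℝ) + β := by rw [hsum]; exact hαpos
    exact key (c - a) hq β hβpos hdirr d b n m (by omega) (by omega) hβn hqβ
      (by rw [hsum]; exact hαm)
  refine ⟨hac, ?_⟩
  have : (a : ℝ) = (c : ℝ) := by exact_mod_cast hac
  linarith
end

section
/- Suppose A, B are positive rationals, m, n > 1, A^(1/m) and B^(1/n) are irreducible radicals, and either m ≠ n, or m = n and (A/B)^(1/n) is irrational. Then 1, A^(1/m), B^(1/n) are linearly independent over ℚ: if a + b·A^(1/m) + c·B^(1/n) = 0 with a, b, c rational, then a = b = c = 0. (Consequence 3.3) -/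
open Polynomial IntermediateField

lemma irredRad_minpoly (A : ℚ) (hA : 0 < A) (m : ℕ) (hm : 1 ≤ m) (h : IrredRad A m) :
    minpoly ℚ ((A : ℝ) ^ ((1 : ℝ) / m)) = X ^ m - C A := by
  have hm0 : m ≠ 0 := by omega
  set α : ℝ := (A : ℝ) ^ ((1 : ℝ) / m) with hαdef
  have hApos : (0:ℝ) < (A:ℝ) := by exact_mod_cast hA
  have hαpos : 0 < α := Real.rpow_pos_of_pos hApos _
  have hαm : α ^ m = (A : ℝ) := by
    rw [hαdef, one_div]; exact Real.rpow_inv_natCast_pow hApos.le hm0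
  have haev : (Polynomial.aeval α) (X ^ m - C A : ℚ[X]) = 0 := by
    simp [hαm]
  have hint : IsIntegral ℚ α := ⟨X ^ m - C A, monic_X_pow_sub_C A hm0, by
    simpa [Polynomial.aeval_def] using haev⟩
  have hdvd : minpoly ℚ α ∣ X ^ m - C A := minpoly.dvd ℚ α haev
  set d := (minpoly ℚ α).natDegree with hddef
  have hd0 : 0 < d := minpoly.natDegree_pos hint
  have hXne : (X ^ m - C A : ℚ[X]) ≠ 0 := X_pow_sub_C_ne_zero (by omega) A
  have hdm : d ≤ m := by
    have := natDegree_le_of_dvd hdvd hXne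
    rwa [natDegree_X_pow_sub_C] at this
  -- complex roots all have absolute value α
  set P : ℂ[X] := (minpoly ℚ α).map (algebraMap ℚ ℂ) with hPdef
  have hPmonic : P.Monic := (minpoly.monic hint).map _
  have hPdeg : P.natDegree = d := (minpoly.monic hint).natDegree_map _
  have hsplits : P.Splits := IsAlgClosed.splits P
  have hroots : ∀ z ∈ P.roots, ‖z‖ = α := by
    intro z hz
    have hz0 : (Polynomial.aeval z) (minpoly ℚ α) = 0 := by
      have := isRoot_of_mem_roots hz
      rwa [IsRoot, eval_map, ← aeval_def] at this
    obtain ⟨r, hr⟩ := hdvd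
    have hzm : z ^ m = ((A : ℚ) : ℂ) := by
      have : (Polynomial.aeval z) (X ^ m - C A : ℚ[X]) = 0 := by
        rw [hr, map_mul, hz0, zero_mul]
      have h2 : z ^ m - ((A:ℚ):ℂ) = 0 := by simpa using this
      exact sub_eq_zero.mp h2
    have habs : ‖z‖ ^ m = (A : ℝ) := by
      rw [← norm_pow, hzm]
      rw [show ((A:ℚ):ℂ) = (((A:ℚ):ℝ):ℂ) by push_cast; ring]
      rw [Complex.norm_real, Real.norm_eq_abs, abs_of_pos hApos]
    calc ‖z‖ = (‖z‖ ^ m) ^ ((m:ℝ)⁻¹) := by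
          rw [Real.pow_rpow_inv_natCast (norm_nonneg z) hm0]
      _ = α := by rw [habs, hαdef, one_div]
  have hcard : P.roots.card = d := by
    rw [← hPdeg]; exact (splits_iff_card_roots.mp hsplits)
  have hc0 : P.coeff 0 = (-1) ^ d * P.roots.prod := by
    rw [hsplits.coeff_zero_eq_prod_roots_of_monic hPmonic, hPdeg]
  have habs0 : |((minpoly ℚ α).coeff 0 : ℝ)| = α ^ d := by
    have h1 : ‖P.coeff 0‖ = α ^ d := by
      rw [hc0, norm_mul, norm_pow]
      have : ‖P.roots.prod‖ = α ^ d := by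
        rw [show ‖P.roots.prod‖ = (P.roots.map (‖·‖)).prod from
          map_multiset_prod (normHom : ℂ →*₀ ℝ) _]
        have hrep : P.roots.map (‖·‖)
            = Multiset.replicate (Multiset.card (P.roots.map (‖·‖))) α :=
          Multiset.eq_replicate_of_mem (fun x hx => by
            obtain ⟨z, hz, rfl⟩ := Multiset.mem_map.mp hx
            exact hroots z hz)
        rw [hrep, Multiset.prod_replicate, Multiset.card_map, hcard]
      simp [this]
    have h2 : P.coeff 0 = (((minpoly ℚ α).coeff 0 : ℝ) : ℂ) := by
      rw [hPdef, coeff_map, eq_ratCast]; push_cast; ring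
    rw [h2, Complex.norm_real, Real.norm_eq_abs] at h1
    exact h1
  set Cq : ℚ := |(minpoly ℚ α).coeff 0| with hCdef
  have hCcast : ((Cq : ℚ) : ℝ) = α ^ d := by
    rw [hCdef]; push_cast; exact habs0
  have hCpos : 0 < Cq := by
    have : (0:ℝ) < ((Cq:ℚ):ℝ) := by rw [hCcast]; positivity
    exact_mod_cast this
  have hαC : α = ((Cq : ℚ) : ℝ) ^ ((1:ℝ)/d) := by
    rw [hCcast, one_div, Real.pow_rpow_inv_natCast hαpos.le (by omega)]
  have hdm' : m ≤ d := by
    by_contra hlt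
    exact h ⟨d, Cq, hd0, by omega, hCpos, by rw [← hαdef, hαC]⟩
  have hdeq : d = m := le_antisymm hdm hdm'
  have hassoc : Associated (minpoly ℚ α) (X ^ m - C A) :=
    associated_of_dvd_of_natDegree_le hdvd hXne
      (by rw [natDegree_X_pow_sub_C, ← hddef, hdeq])
  exact eq_of_monic_of_associated (minpoly.monic hint) (monic_X_pow_sub_C A hm0) hassoc

lemma irredRad_irrational (A : ℚ) (hA : 0 < A) (m : ℕ) (hm : 1 < m) (h : IrredRad A m) :
    Irrational ((A : ℝ) ^ ((1 : ℝ) / m)) := by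
  rintro ⟨r, hr⟩
  have hApos : (0:ℝ) < (A:ℝ) := by exact_mod_cast hA
  have hαpos : (0:ℝ) < (A : ℝ) ^ ((1 : ℝ) / m) := Real.rpow_pos_of_pos hApos _
  have hrpos : 0 < r := by rw [← hr] at hαpos; exact_mod_cast hαpos
  exact h ⟨1, r, le_refl 1, hm, hrpos, by
    rw [show ((1:ℝ)/((1:ℕ):ℝ)) = 1 by norm_num, Real.rpow_one, hr]⟩

lemma ratCast_mem_intermediate {K : Type*} [Field K] [Algebra ℚ K]
    (L : IntermediateField ℚ K) (p : ℚ) : ((p : ℚ) : K) ∈ L := by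
  have := L.algebraMap_mem p
  rwa [eq_ratCast] at this

theorem stmt_10 (A B : ℚ) (hA : 0 < A) (hB : 0 < B)
    (m n : ℕ) (hm : 1 < m) (hn : 1 < n)
    (hAirr : IrredRad A m) (hBirr : IrredRad B n)
    (hcase : m ≠ n ∨ (m = n ∧ Irrational (((A / B : ℚ) : ℝ) ^ ((1 : ℝ) / n))))
    (a b c : ℚ)
    (heq : (a : ℝ) + b * (A : ℝ) ^ ((1 : ℝ) / m)
         + c * (B : ℝ) ^ ((1 : ℝ) / n) = 0) :
    a = 0 ∧ b = 0 ∧ c = 0 := by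
  have hApos : (0:ℝ) < (A:ℝ) := by exact_mod_cast hA
  have hBpos : (0:ℝ) < (B:ℝ) := by exact_mod_cast hB
  set α : ℝ := (A : ℝ) ^ ((1 : ℝ) / m) with hαdef
  set β : ℝ := (B : ℝ) ^ ((1 : ℝ) / n) with hβdef
  have hαpos : 0 < α := Real.rpow_pos_of_pos hApos _
  have hβpos : 0 < β := Real.rpow_pos_of_pos hBpos _
  have hαm : α ^ m = (A : ℝ) := by
    rw [hαdef, one_div]; exact Real.rpow_inv_natCast_pow hApos.le (by omega)
  have hβn : β ^ n = (B : ℝ) := by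
    rw [hβdef, one_div]; exact Real.rpow_inv_natCast_pow hBpos.le (by omega)
  have hαint : IsIntegral ℚ α := ⟨X ^ m - C A, monic_X_pow_sub_C A (by omega), by
    simp [Polynomial.eval₂_sub, hαm]⟩
  have hβint : IsIntegral ℚ β := ⟨X ^ n - C B, monic_X_pow_sub_C B (by omega), by
    simp [Polynomial.eval₂_sub, hβn]⟩
  have hminα : minpoly ℚ α = X ^ m - C A := irredRad_minpoly A hA m (by omega) hAirr
  have hminβ : minpoly ℚ β = X ^ n - C B := irredRad_minpoly B hB n (by omega) hBirr
  by_cases hb : b = 0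
  · by_cases hc : c = 0
    · refine ⟨?_, hb, hc⟩
      have : (a:ℝ) = 0 := by simpa [hb, hc] using heq
      exact_mod_cast this
    · exfalso
      have hcR : (c:ℝ) ≠ 0 := by exact_mod_cast hc
      refine irredRad_irrational B hB n hn hBirr ⟨-a/c, ?_⟩
      rw [← hβdef]
      have : (a:ℝ) + c * β = 0 := by simpa [hb] using heq
      push_cast
      field_simp
      linarith
  by_cases hc : c = 0
  · exfalso
    have hbR : (b:ℝ) ≠ 0 := by exact_mod_cast hb
    refine irredRad_irrational A hA m hm hAirr ⟨-a/b, ?_⟩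
    rw [← hαdef]
    have : (a:ℝ) + b * α = 0 := by simpa [hc] using heq
    push_cast
    field_simp
    linarith
  -- main case
  exfalso
  have hcR : (c:ℝ) ≠ 0 := by exact_mod_cast hc
  have hbR : (b:ℝ) ≠ 0 := by exact_mod_cast hb
  set p : ℚ := -a/c with hpdef
  set q : ℚ := -b/c with hqdef
  have hq : q ≠ 0 := by
    rw [hqdef]; exact div_ne_zero (neg_ne_zero.mpr hb) hc
  have hqR : (q:ℝ) ≠ 0 := by exact_mod_cast hq
  have h1 : (c:ℝ) * β = -(a:ℝ) - b * α := by linarith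
  have hpq : β = (p:ℝ) + (q:ℝ) * α := by
    rw [hpdef, hqdef]; push_cast; field_simp; linear_combination h1
  -- degrees force m = n
  have hmn : m = n := by
    have hβmem : β ∈ ℚ⟮α⟯ := by
      rw [hpq]
      exact add_mem (ratCast_mem_intermediate _ p)
        (mul_mem (ratCast_mem_intermediate _ q) (mem_adjoin_simple_self ℚ α))
    have hαmem : α ∈ ℚ⟮β⟯ := by
      have : α = ((q⁻¹:ℚ):ℝ) * (β - (p:ℝ)) := by
        rw [hpq]; push_cast; field_simp; ring
      rw [this]
      exact mul_mem (ratCast_mem_intermediate _ _)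
        (sub_mem (mem_adjoin_simple_self ℚ β) (ratCast_mem_intermediate _ p))
    have hfe : ℚ⟮α⟯ = ℚ⟮β⟯ :=
      le_antisymm (adjoin_simple_le_iff.mpr hαmem) (adjoin_simple_le_iff.mpr hβmem)
    have e1 : Module.finrank ℚ ℚ⟮α⟯ = m := by
      rw [adjoin.finrank hαint, hminα, natDegree_X_pow_sub_C]
    have e2 : Module.finrank ℚ ℚ⟮β⟯ = n := by
      rw [adjoin.finrank hβint, hminβ, natDegree_X_pow_sub_C]
    rw [hfe, e2] at e1
    exact e1.symm
  obtain ⟨-, hirr2⟩ : m = n ∧ Irrational (((A / B : ℚ) : ℝ) ^ ((1 : ℝ) / n)) := by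
    rcases hcase with h | h
    · exact absurd hmn h
    · exact h
  subst hmn
  -- complex stage
  set ζ : ℂ := Complex.exp (2 * Real.pi * Complex.I / m) with hζdef
  have hζ : IsPrimitiveRoot ζ m := Complex.isPrimitiveRoot_exp m (by omega)
  have hζm : ζ ^ m = 1 := hζ.pow_eq_one
  have hζne1 : ζ ≠ 1 := hζ.ne_one hm
  have hfirr : Irreducible (X ^ m - C A : ℚ[X]) := hminα ▸ minpoly.irreducible hαint
  haveI : Fact (Irreducible (X ^ m - C A : ℚ[X])) := ⟨hfirr⟩
  have hαC : ((α:ℝ):ℂ) ^ m = ((A:ℚ):ℂ) := by exact_mod_cast congrArg Complex.ofReal hαm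
  have haev1 : (Polynomial.aeval α) (X ^ m - C A : ℚ[X]) = 0 := by simp [hαm]
  have haev2 : (Polynomial.aeval (ζ * (α:ℂ))) (X ^ m - C A : ℚ[X]) = 0 := by
    simp [mul_pow, hζm, hαC]
  set φ₁ : AdjoinRoot (X ^ m - C A : ℚ[X]) →ₐ[ℚ] ℝ :=
    AdjoinRoot.liftAlgHom _ (Algebra.ofId ℚ ℝ) α haev1 with hφ₁def
  set φ₂ : AdjoinRoot (X ^ m - C A : ℚ[X]) →ₐ[ℚ] ℂ :=
    AdjoinRoot.liftAlgHom _ (Algebra.ofId ℚ ℂ) (ζ * (α:ℂ)) haev2 with hφ₂def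
  set y : AdjoinRoot (X ^ m - C A : ℚ[X]) :=
    algebraMap ℚ _ p + algebraMap ℚ _ q * AdjoinRoot.root _ with hydef
  have hφ₁y : φ₁ y = β := by
    rw [hydef, map_add, map_mul]; erw [AlgHom.commutes, AlgHom.commutes]; rw [hφ₁def]; erw [
      AdjoinRoot.liftAlgHom_root]; rw [eq_ratCast, eq_ratCast]
    exact hpq.symm
  have hym : y ^ m = algebraMap ℚ _ B := by
    apply φ₁.toRingHom.injective
    show φ₁ (y ^ m) = φ₁ (algebraMap ℚ _ B)
    rw [map_pow, hφ₁y]; erw [AlgHom.commutes]; rw [eq_ratCast]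
    exact hβn
  have hφ₂y : φ₂ y = (p:ℂ) + (q:ℂ) * (ζ * (α:ℂ)) := by
    rw [hydef, map_add, map_mul]; erw [AlgHom.commutes, AlgHom.commutes]; rw [hφ₂def]; erw [
      AdjoinRoot.liftAlgHom_root]; rw [eq_ratCast, eq_ratCast]
  have hw : ((p:ℂ) + (q:ℂ) * (ζ * (α:ℂ))) ^ m = ((B:ℚ):ℂ) := by
    have h3 := congrArg φ₂ hym
    rw [map_pow, hφ₂y] at h3; erw [AlgHom.commutes] at h3; rw [eq_ratCast] at h3
    exact h3
  set w₀ : ℂ := (p:ℂ) + (q:ℂ) * ((α:ℝ):ℂ) with hw₀def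
  have hw₀ : w₀ = ((β:ℝ):ℂ) := by rw [hw₀def, hpq]; push_cast; ring
  have hw₀ne : w₀ ≠ 0 := by
    rw [hw₀]; exact Complex.ofReal_ne_zero.mpr hβpos.ne'
  have hβC : w₀ ^ m = ((B:ℚ):ℂ) := by
    rw [hw₀]; exact_mod_cast congrArg Complex.ofReal hβn
  have hBne : ((B:ℚ):ℂ) ≠ 0 := by
    exact_mod_cast (Rat.cast_ne_zero (α := ℂ)).mpr hB.ne'
  have hdiv : (((p:ℂ) + (q:ℂ) * (ζ * (α:ℂ))) / w₀) ^ m = 1 := by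
    rw [div_pow, hw, hβC]; exact div_self hBne
  haveI : NeZero m := ⟨by omega⟩
  obtain ⟨k, hk, hkeq⟩ := hζ.eq_pow_of_pow_eq_one hdiv
  have hkey : (p:ℂ) + (q:ℂ) * (ζ * (α:ℂ)) = ζ ^ k * w₀ := by
    rw [hkeq]; field_simp
  have hαC0 : ((α:ℝ):ℂ) ≠ 0 := Complex.ofReal_ne_zero.mpr hαpos.ne'
  have hqC : (q:ℂ) ≠ 0 := by exact_mod_cast (Rat.cast_ne_zero (α := ℂ)).mpr hq
  by_cases h1 : ζ ^ k = 1
  · rw [h1, one_mul, hw₀def] at hkey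
    have h2 : (q:ℂ) * ((α:ℝ):ℂ) * ζ = (q:ℂ) * ((α:ℝ):ℂ) * 1 := by
      linear_combination hkey
    exact hζne1 (mul_left_cancel₀ (mul_ne_zero hqC hαC0) h2)
  by_cases h2 : ζ ^ k = ζ
  · rw [h2, hw₀def] at hkey
    have hp0 : p = 0 := by
      have h3 : (p:ℂ) * (1 - ζ) = 0 := by linear_combination hkey
      rcases mul_eq_zero.mp h3 with h | h
      · exact_mod_cast h
      · exact absurd (by linear_combination -h : ζ = 1) hζne1
    have hβqα : β = (q:ℝ) * α := by rw [hpq, hp0]; push_cast; ring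
    have hBq : (B:ℝ) = (q:ℝ) ^ m * (A:ℝ) := by rw [← hβn, hβqα, mul_pow, hαm]
    have hBq' : B = q ^ m * A := by exact_mod_cast hBq
    have hqm : 0 < q ^ m := by
      have h4 : q ^ m = B / A := by rw [hBq']; field_simp
      rw [h4]; positivity
    set r : ℚ := |q|⁻¹ with hrdef
    have hr0 : 0 ≤ (r:ℝ) := by positivity
    have hABr : A / B = r ^ m := by
      rw [hrdef, hBq', inv_pow, ← abs_pow, abs_of_pos hqm]
      field_simp [hA.ne']
    refine hirr2 ⟨r, ?_⟩
    rw [hABr]; push_cast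
    rw [one_div, Real.pow_rpow_inv_natCast hr0 (by omega)]
  · have hsub : ζ - ζ ^ k ≠ 0 := sub_ne_zero.mpr (fun h => h2 h.symm)
    have hrel : (q:ℂ) * ((α:ℝ):ℂ) * (ζ - ζ ^ k) = (p:ℂ) * (ζ ^ k - 1) := by
      rw [hw₀def] at hkey; linear_combination hkey
    have hαval : ((α:ℝ):ℂ) = (p:ℂ) * (ζ ^ k - 1) / ((q:ℂ) * (ζ - ζ ^ k)) := by
      rw [← hrel]; field_simp
    have hζint : IsIntegral ℚ ζ := ⟨X ^ m - C 1, monic_X_pow_sub_C 1 (by omega), by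
      simp [Polynomial.eval₂_sub, hζm]⟩
    haveI := IntermediateField.adjoin.finiteDimensional hζint
    have hmem : ((α:ℝ):ℂ) ∈ ℚ⟮ζ⟯ := by
      rw [hαval]
      exact div_mem
        (mul_mem (ratCast_mem_intermediate _ p)
          (sub_mem (pow_mem (mem_adjoin_simple_self ℚ ζ) k) (one_mem _)))
        (mul_mem (ratCast_mem_intermediate _ q)
          (sub_mem (mem_adjoin_simple_self ℚ ζ) (pow_mem (mem_adjoin_simple_self ℚ ζ) k)))
    have hminαC : minpoly ℚ ((α:ℝ):ℂ) = X ^ m - C A := by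
      rw [show ((α:ℝ):ℂ) = algebraMap ℝ ℂ α from rfl,
        minpoly.algebraMap_eq (algebraMap ℝ ℂ).injective, hminα]
    set x : ℚ⟮ζ⟯ := ⟨((α:ℝ):ℂ), hmem⟩ with hxdef
    have hminx : minpoly ℚ x = X ^ m - C A := by
      rw [← hminαC]
      exact (minpoly.algebraMap_eq (algebraMap ℚ⟮ζ⟯ ℂ).injective x).symm
    have hle := minpoly.natDegree_le (A := ℚ) x
    rw [hminx, natDegree_X_pow_sub_C] at hle
    have hfr : Module.finrank ℚ ℚ⟮ζ⟯ = Nat.totient m := by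
      rw [adjoin.finrank hζint, ← Polynomial.cyclotomic_eq_minpoly_rat hζ (by omega),
        natDegree_cyclotomic]
    rw [hfr] at hle
    have := Nat.totient_lt m hm
    omega
end

section
/- If A is a positive rational, n ≥ 2, A^(1/n) is an irreducible radical, a, b are rationals with b ≠ 0, then a + b·A^(1/n) is not a root of any nonzero polynomial of degree less than n with rational coefficients. (Consequence 3.4) -/
theorem stmt_11 (A : ℚ) (hA : 0 < A) (n : ℕ) (hn : 2 ≤ n)
    (hirr : IrredRad A n) (a b : ℚ) (hb : b ≠ 0)
    (p : Polynomial ℚ) (hp : p ≠ 0) (hdeg : p.degree < (n : WithBot ℕ)) :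
    Polynomial.aeval ((a : ℝ) + b * (A : ℝ) ^ ((1 : ℝ) / n)) p ≠ 0 := by
  classical
  set x : ℝ := (A : ℝ) ^ ((1 : ℝ) / n) with hxdef
  have hn0 : n ≠ 0 := by omega
  have hA0 : (0 : ℝ) < (A : ℝ) := by exact_mod_cast hA
  have hx0 : 0 < x := Real.rpow_pos_of_pos hA0 _
  have hxn : x ^ n = (A : ℝ) := by
    rw [hxdef, ← Real.rpow_natCast ((A : ℝ) ^ ((1 : ℝ) / n)) n, ← Real.rpow_mul hA0.le]
    rw [one_div, inv_mul_cancel₀ (by exact_mod_cast hn0 : (n : ℝ) ≠ 0), Real.rpow_one]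
  -- x is integral over ℚ
  have hroot : Polynomial.aeval x (Polynomial.X ^ n - Polynomial.C A) = 0 := by
    simp [hxn]
  have hint : IsIntegral ℚ x :=
    ⟨Polynomial.X ^ n - Polynomial.C A, Polynomial.monic_X_pow_sub_C A hn0, hroot⟩
  set μ : Polynomial ℚ := minpoly ℚ x with hμdef
  set d : ℕ := μ.natDegree with hddef
  have hd1 : 0 < d := minpoly.natDegree_pos hint
  have hμmon : μ.Monic := minpoly.monic hint
  -- work in ℂ
  set μC : Polynomial ℂ := μ.map (algebraMap ℚ ℂ) with hμCdef
  have hμCmon : μC.Monic := hμmon.map _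
  have hsplits : Polynomial.Splits μC :=
    IsAlgClosed.splits μC
  have hdeg' : μC.natDegree = d := Polynomial.natDegree_map _
  have hcard : Multiset.card μC.roots = d := by
    rw [Polynomial.splits_iff_card_roots.1 hsplits, hdeg']
  -- every complex root of μC has absolute value x
  have habs : ∀ z ∈ μC.roots, ‖z‖ = x := by
    intro z hz
    have hzroot : Polynomial.eval z μC = 0 := (Polynomial.mem_roots (hμCmon.ne_zero)).1 hz
    have hdvd : μ ∣ (Polynomial.X ^ n - Polynomial.C A) := minpoly.dvd ℚ x hroot
    have hdvdC : μC ∣ (Polynomial.X ^ n - Polynomial.C (A : ℂ)) := by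
      have := Polynomial.map_dvd (algebraMap ℚ ℂ) hdvd
      simpa using this
    have hzn : z ^ n = (A : ℂ) := by
      obtain ⟨g, hg⟩ := hdvdC
      have := congrArg (Polynomial.eval z) hg
      simp [hzroot] at this
      linear_combination this
    have habsn : ‖z‖ ^ n = (A : ℝ) := by
      have := congrArg norm hzn
      rw [norm_pow] at this
      rw [this]
      simp [Complex.norm_real, abs_of_pos hA0, ← Complex.ofReal_ratCast, ← Rat.norm_cast_real,
        Real.norm_eq_abs]
    have h1 : ‖z‖ = (‖z‖ ^ n) ^ ((n : ℝ))⁻¹ :=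
      (Real.pow_rpow_inv_natCast (norm_nonneg z) hn0).symm
    rw [h1, habsn, hxdef, one_div]
  -- product of roots gives x ^ d rational
  have hprod : μC.coeff 0 = (-1) ^ d * μC.roots.prod := by
    rw [← hdeg']
    exact hsplits.coeff_zero_eq_prod_roots_of_monic hμCmon
  have habsprod : ‖μC.coeff 0‖ = x ^ d := by
    rw [hprod, norm_mul, norm_pow]
    rw [show ‖(-1 : ℂ)‖ = 1 by simp, one_pow, one_mul]
    rw [show ‖μC.roots.prod‖ = (μC.roots.map (fun z => ‖z‖)).prod from
      map_multiset_prod (normHom (α := ℂ)) _]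
    rw [Multiset.map_congr rfl habs, Multiset.map_const', hcard, Multiset.prod_replicate]
  have hcoeff : μC.coeff 0 = ((μ.coeff 0 : ℚ) : ℂ) := by
    rw [hμCdef, Polynomial.coeff_map]
    exact eq_ratCast (algebraMap ℚ ℂ) (μ.coeff 0)
  set B : ℚ := |μ.coeff 0| with hBdef
  have hB0 : 0 < B := by
    have := minpoly.coeff_zero_ne_zero hint (ne_of_gt hx0)
    exact abs_pos.2 this
  have hBx : (B : ℝ) = x ^ d := by
    have h3 : ‖((μ.coeff 0 : ℚ) : ℂ)‖ = ((|μ.coeff 0| : ℚ) : ℝ) := by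
      rw [show ((μ.coeff 0 : ℚ) : ℂ) = (((μ.coeff 0 : ℚ) : ℝ) : ℂ) from by norm_cast,
        Complex.norm_real, Real.norm_eq_abs]
      norm_cast
    rw [← habsprod, hcoeff, h3, hBdef]
  have hxB : x = (B : ℝ) ^ ((1 : ℝ) / d) := by
    rw [hBx, one_div]
    exact (Real.pow_rpow_inv_natCast hx0.le (by omega)).symm
  -- degree of minpoly is at least n
  have hnd : n ≤ d := by
    by_contra h
    push_neg at h
    exact hirr ⟨d, B, hd1, h, hB0, hxB⟩
  -- now the main argument
  intro hy
  set l : Polynomial ℚ := Polynomial.C b * Polynomial.X + Polynomial.C a with hldef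
  set q : Polynomial ℚ := p.comp l with hqdef
  have hql : Polynomial.aeval x q = 0 := by
    rw [hqdef, Polynomial.aeval_comp]
    have : Polynomial.aeval x l = (a : ℝ) + b * x := by
      simp [hldef]; ring
    rw [this]
    exact hy
  have hq0 : q ≠ 0 := by
    intro hq
    apply hp
    have hinv : l.comp (Polynomial.C b⁻¹ * Polynomial.X + Polynomial.C (-a / b)) = Polynomial.X := by
      have h1 : b * b⁻¹ = 1 := mul_inv_cancel₀ hb
      have h2 : b * (-a / b) + a = 0 := by field_simp; ring
      simp only [hldef, Polynomial.add_comp, Polynomial.mul_comp, Polynomial.C_comp,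
        Polynomial.X_comp, mul_add, ← mul_assoc, ← Polynomial.C_mul, h1, Polynomial.C_1, one_mul]
      rw [add_assoc, ← Polynomial.C_add, h2]
      simp
    have : p = (p.comp l).comp (Polynomial.C b⁻¹ * Polynomial.X + Polynomial.C (-a / b)) := by
      rw [Polynomial.comp_assoc, hinv, Polynomial.comp_X]
    rw [this, ← hqdef, hq, Polynomial.zero_comp]
  have hdvdq : μ ∣ q := minpoly.dvd ℚ x hql
  have hdq : d ≤ q.natDegree := Polynomial.natDegree_le_natDegree (Polynomial.degree_le_of_dvd hdvdq hq0)
  have hqdeg : q.natDegree = p.natDegree := by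
    rw [hqdef, Polynomial.natDegree_comp, hldef, Polynomial.natDegree_linear hb, mul_one]
  have hpn : p.natDegree < n := (Polynomial.natDegree_lt_iff_degree_lt hp).2 hdeg
  omega
end

section
/- If A is a positive rational and A^(1/n) is an irreducible radical (n ≥ 2), then the polynomial X^n − A is irreducible over ℚ. (Lemma 4.1) -/
theorem stmt_12 (A : ℚ) (hA : 0 < A) (n : ℕ) (hn : 2 ≤ n)
    (hirr : IrredRad A n) :
    Irreducible (Polynomial.X ^ n - Polynomial.C A : Polynomial ℚ) := by
  classical
  have hn0 : (n : ℝ) ≠ 0 := by positivity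
  have hAR : (0 : ℝ) < (A : ℝ) := by exact_mod_cast hA
  set α : ℝ := (A : ℝ) ^ ((1 : ℝ) / n) with hαdef
  have hα : 0 < α := Real.rpow_pos_of_pos hAR _
  have hαn : α ^ n = (A : ℝ) := by
    rw [hαdef, ← Real.rpow_natCast ((A : ℝ) ^ ((1:ℝ)/n)) n, ← Real.rpow_mul hAR.le,
      one_div_mul_cancel hn0, Real.rpow_one]
  set p : Polynomial ℚ := Polynomial.X ^ n - Polynomial.C A with hpdef
  have hpmonic : p.Monic := Polynomial.monic_X_pow_sub_C A (by omega)
  have hpne : p ≠ 0 := hpmonic.ne_zero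
  have hpdeg : p.natDegree = n := by
    rw [hpdef]; exact Polynomial.natDegree_X_pow_sub_C
  have haev : (Polynomial.aeval α) p = 0 := by
    simp [hpdef, hαn]
  have hint : IsIntegral ℚ α := ⟨p, hpmonic, haev⟩
  set f : Polynomial ℚ := minpoly ℚ α with hfdef
  have hfmonic : f.Monic := minpoly.monic hint
  have hfdvd : f ∣ p := minpoly.dvd ℚ α haev
  set m : ℕ := f.natDegree with hmdef
  have hm1 : 1 ≤ m := minpoly.natDegree_pos hint
  have hmn : m ≤ n := by
    have := Polynomial.natDegree_le_of_dvd hfdvd hpne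
    rwa [hpdeg] at this
  -- complex roots
  set g : Polynomial ℂ := f.map (algebraMap ℚ ℂ) with hgdef
  have hgmonic : g.Monic := hfmonic.map _
  have hgsplits : g.Splits := IsAlgClosed.splits g
  have hgdeg : g.natDegree = m := Polynomial.natDegree_map _
  have hcard : Multiset.card g.roots = m := by
    rw [← hgdeg]; exact (Polynomial.splits_iff_card_roots.mp hgsplits)
  have hroots : ∀ z ∈ g.roots, ‖z‖ = α := by
    intro z hz
    have hz0 : Polynomial.aeval z f = 0 := by
      have := Polynomial.isRoot_of_mem_roots hz
      rwa [Polynomial.IsRoot, hgdef, Polynomial.eval_map, ← Polynomial.aeval_def] at this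
    have hzp : Polynomial.aeval z p = 0 := by
      obtain ⟨c, hc⟩ := hfdvd
      rw [hc, map_mul, hz0, zero_mul]
    have hzn : z ^ n = (A : ℂ) := by
      have h : z ^ n - (A : ℂ) = 0 := by simpa [hpdef] using hzp
      exact sub_eq_zero.mp h
    have habs : ‖z‖ ^ n = (A : ℝ) := by
      rw [← norm_pow, hzn]
      rw [show ((A : ℂ)) = ((A : ℝ) : ℂ) by push_cast; ring]
      rw [Complex.norm_real, Real.norm_eq_abs, abs_of_nonneg hAR.le]
    have h1 : ‖z‖ ^ n = α ^ n := by rw [habs, hαn]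
    exact (pow_left_inj₀ (norm_nonneg z) hα.le (by omega)).mp h1
  -- product of roots
  have hprod : ‖g.roots.prod‖ = α ^ m := by
    rw [show ‖g.roots.prod‖ = (normHom : ℂ →*₀ ℝ) g.roots.prod from rfl, map_multiset_prod]
    have hrep : Multiset.map (⇑(normHom : ℂ →*₀ ℝ)) g.roots = Multiset.replicate m α := by
      apply Multiset.eq_replicate.mpr
      refine ⟨by rw [Multiset.card_map, hcard], fun x hx => ?_⟩
      obtain ⟨z, hz, rfl⟩ := Multiset.mem_map.mp hx
      exact hroots z hz
    rw [hrep, Multiset.prod_replicate]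
  have hcoeff : ‖g.coeff 0‖ = α ^ m := by
    rw [hgsplits.coeff_zero_eq_prod_roots_of_monic hgmonic,
      norm_mul, norm_pow, norm_neg, norm_one, one_pow, one_mul]
    exact hprod
  have hB : ((|f.coeff 0| : ℚ) : ℝ) = α ^ m := by
    have hg0 : g.coeff 0 = ((f.coeff 0 : ℚ) : ℂ) := by
      simp [hgdef, Polynomial.coeff_map]
    rw [hg0] at hcoeff
    have h2 : (((f.coeff 0 : ℚ)) : ℂ) = (((f.coeff 0 : ℚ) : ℝ) : ℂ) := by push_cast; ring
    rw [h2, Complex.norm_real, Real.norm_eq_abs] at hcoeff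
    rw [show ((|f.coeff 0| : ℚ) : ℝ) = |((f.coeff 0 : ℚ) : ℝ)| by push_cast; ring]
    exact hcoeff
  -- conclude m = n
  have hmeq : m = n := by
    by_contra hne
    have hmlt : m < n := lt_of_le_of_ne hmn hne
    apply hirr
    refine ⟨m, |f.coeff 0|, hm1, hmlt, ?_, ?_⟩
    · have h3 : (0 : ℝ) < ((|f.coeff 0| : ℚ) : ℝ) := by rw [hB]; positivity
      exact_mod_cast h3
    · rw [← hαdef, hB, ← Real.rpow_natCast α m, ← Real.rpow_mul hα.le,
        mul_one_div_cancel (by positivity : (m : ℝ) ≠ 0), Real.rpow_one]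
  -- f = p
  have hfp : p = f := by
    apply Polynomial.eq_of_monic_of_dvd_of_natDegree_le hfmonic hpmonic hfdvd
    rw [hpdeg, ← hmeq]
  have := minpoly.irreducible hint
  rw [← hfdef, ← hfp] at this
  exact this
end

section
/- If A is a positive rational, n ≥ 2, A^(1/n) is an irreducible radical, and p is a polynomial with coefficients in ℚ(i) (Gaussian rationals) of degree less than n sharing a complex root with X^n − A, then p = 0. (Remark 2.1) -/
open Polynomial

/-- The Gaussian rationals as a subfield of `ℂ`. -/
noncomputable def GQ : Subfield ℂ where
  carrier := {z | ∃ a b : ℚ, z = (a : ℂ) + (b : ℂ) * Complex.I}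
  mul_mem' := by
    rintro x y ⟨a, b, rfl⟩ ⟨c, d, rfl⟩
    refine ⟨a * c - b * d, a * d + b * c, ?_⟩
    push_cast
    linear_combination (b * d : ℂ) * Complex.I_sq
  one_mem' := ⟨1, 0, by push_cast; ring⟩
  add_mem' := by
    rintro x y ⟨a, b, rfl⟩ ⟨c, d, rfl⟩
    exact ⟨a + c, b + d, by push_cast; ring⟩
  zero_mem' := ⟨0, 0, by push_cast; ring⟩
  neg_mem' := by
    rintro x ⟨a, b, rfl⟩
    exact ⟨-a, -b, by push_cast; ring⟩
  inv_mem' := by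
    rintro x ⟨a, b, rfl⟩
    by_cases h : a ^ 2 + b ^ 2 = 0
    · have ha : a = 0 := by nlinarith [sq_nonneg a, sq_nonneg b]
      have hb : b = 0 := by nlinarith [sq_nonneg a, sq_nonneg b]
      exact ⟨0, 0, by simp [ha, hb]⟩
    · refine ⟨a / (a ^ 2 + b ^ 2), -b / (a ^ 2 + b ^ 2), ?_⟩
      have h' : ((a : ℂ) ^ 2 + (b : ℂ) ^ 2) ≠ 0 := by
        intro hc
        apply h
        have : (((a ^ 2 + b ^ 2 : ℚ)) : ℂ) = 0 := by push_cast; linear_combination hc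
        exact_mod_cast this
      apply inv_eq_of_mul_eq_one_right
      push_cast
      field_simp
      linear_combination (-(b:ℂ)^2) * Complex.I_sq

lemma mem_GQ {z : ℂ} : z ∈ GQ ↔ ∃ a b : ℚ, z = (a : ℂ) + (b : ℂ) * Complex.I :=
  Iff.rfl

lemma conj_GQ_explicit (a b : ℚ) :
    (starRingEnd ℂ) ((a : ℂ) + (b : ℂ) * Complex.I) = (a : ℂ) + ((-b : ℚ) : ℂ) * Complex.I := by
  calc (starRingEnd ℂ) ((a : ℂ) + (b : ℂ) * Complex.I)
      = (starRingEnd ℂ) (((a : ℝ) : ℂ) + ((b : ℝ) : ℂ) * Complex.I) := by norm_cast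
    _ = ((a : ℝ) : ℂ) + ((b : ℝ) : ℂ) * (-Complex.I) := by
        rw [map_add, map_mul, Complex.conj_ofReal, Complex.conj_ofReal, Complex.conj_I]
    _ = (a : ℂ) + ((-b : ℚ) : ℂ) * Complex.I := by push_cast; ring

theorem stmt_16 (A : ℚ) (hA : 0 < A) (n : ℕ) (hn : 2 ≤ n)
    (hirr : IrredRad A n) (p : Polynomial ℂ)
    (hcoeff : ∀ k : ℕ, ∃ a b : ℚ, p.coeff k = (a : ℂ) + (b : ℂ) * Complex.I)
    (hdeg : p.degree < (n : WithBot ℕ))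
    (hroot : ∃ z : ℂ, z ^ n = (A : ℂ) ∧ p.eval z = 0) :
    p = 0 := by
  by_contra hp
  obtain ⟨z, hzn, hpz⟩ := hroot
  have hnpos : 0 < n := by omega
  have hApos : (0 : ℝ) < (A : ℝ) := by exact_mod_cast hA
  set α : ℝ := (A : ℝ) ^ ((1 : ℝ) / n) with hαdef
  have hαpos : 0 < α := Real.rpow_pos_of_pos hApos _
  have hroot_abs : ∀ x : ℝ, 0 ≤ x → x ^ n = (A : ℝ) → x = α := by
    intro x hx hxn
    have h := Real.pow_rpow_inv_natCast hx hnpos.ne'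
    rw [hxn] at h
    rw [hαdef, one_div]
    exact h.symm
  have hαn : α ^ n = (A : ℝ) := by
    rw [hαdef, one_div, Real.rpow_inv_natCast_pow hApos.le hnpos.ne']
  have key : ∀ m : ℕ, 1 ≤ m → m < n → ∀ B : ℚ, α ^ m = (B : ℝ) → False := by
    intro m h1 h2 B hB
    apply hirr
    have hBpos : (0 : ℝ) < (B : ℝ) := hB ▸ pow_pos hαpos m
    refine ⟨m, B, h1, h2, by exact_mod_cast hBpos, ?_⟩
    rw [← hαdef, ← hB, one_div, Real.pow_rpow_inv_natCast hαpos.le (by omega)]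
  -- the polynomial over GQ
  have hmem : ∀ k : ℕ, p.coeff k ∈ GQ := by
    intro k
    exact mem_GQ.mpr (hcoeff k)
  set q : Polynomial ↥GQ := ∑ k ∈ p.support, monomial k (⟨p.coeff k, hmem k⟩ : ↥GQ)
    with hqdef
  have hqmap : q.map (algebraMap ↥GQ ℂ) = p := by
    rw [hqdef, Polynomial.map_sum]
    conv_rhs => rw [p.as_sum_support]
    refine Finset.sum_congr rfl fun k _ => ?_
    rw [Polynomial.map_monomial]
    rfl
  have hq0 : q ≠ 0 := by
    intro h
    apply hp
    rw [← hqmap, h, Polynomial.map_zero]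
  have hAK : ((A : ℚ) : ℂ) ∈ GQ := mem_GQ.mpr ⟨A, 0, by push_cast; ring⟩
  set a₀ : ↥GQ := ⟨((A : ℚ) : ℂ), hAK⟩ with ha₀def
  have haeval : (aeval z) (X ^ n - C a₀ : Polynomial ↥GQ) = 0 := by
    simp only [map_sub, aeval_X_pow, aeval_C]
    have h : (algebraMap ↥GQ ℂ) a₀ = ((A : ℚ) : ℂ) := rfl
    rw [h, hzn, sub_self]
  have hint : IsIntegral ↥GQ z :=
    ⟨X ^ n - C a₀, monic_X_pow_sub_C _ hnpos.ne', by
      simpa [Polynomial.eval₂_eq_eval_map, ← Polynomial.aeval_def] using haeval⟩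
  set g : Polynomial ↥GQ := minpoly ↥GQ z with hgdef
  have hgmonic : g.Monic := minpoly.monic hint
  have hg0 : g ≠ 0 := hgmonic.ne_zero
  have hgdvd : g ∣ X ^ n - C a₀ := minpoly.dvd _ _ haeval
  set d : ℕ := g.natDegree with hddef
  have hd1 : 0 < d := minpoly.natDegree_pos hint
  clear_value d
  have haevalq : (aeval z) q = 0 := by
    rw [aeval_def, Polynomial.eval₂_eq_eval_map, hqmap, hpz]
  have hdQ : d < n := by
    have h1 : g.degree ≤ q.degree := minpoly.degree_le_of_ne_zero _ _ hq0 haevalq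
    have h2 : q.degree = p.degree := by
      rw [← hqmap]
      exact (Polynomial.degree_map_eq_of_injective (algebraMap ↥GQ ℂ).injective q).symm
    rw [hddef, Polynomial.natDegree_lt_iff_degree_lt hg0]
    exact lt_of_le_of_lt (h1.trans_eq h2) hdeg
  -- map to ℂ
  set G : Polynomial ℂ := g.map (algebraMap ↥GQ ℂ) with hGdef
  have hGmonic : G.Monic := hgmonic.map _
  have hmapF : (X ^ n - C a₀ : Polynomial ↥GQ).map (algebraMap ↥GQ ℂ)
      = X ^ n - C ((A : ℚ) : ℂ) := by
    rw [Polynomial.map_sub, Polynomial.map_pow, Polynomial.map_X, Polynomial.map_C]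
    rfl
  have hGdvd : G ∣ X ^ n - C ((A : ℚ) : ℂ) := by
    have h := Polynomial.map_dvd (algebraMap ↥GQ ℂ) hgdvd
    rwa [hmapF] at h
  have hGdeg : G.natDegree = d := by
    rw [hddef]
    exact Polynomial.natDegree_map_eq_of_injective (algebraMap ↥GQ ℂ).injective g
  have hsplits : Splits G := IsAlgClosed.splits G
  have hcard : Multiset.card G.roots = d := by
    have h := hsplits.natDegree_eq_card_roots
    rw [hGdeg] at h
    exact h.symm
  have habs_roots : ∀ r ∈ G.roots, ‖r‖ = α := by
    intro r hr
    have hrr : G.IsRoot r := (Polynomial.mem_roots hGmonic.ne_zero).mp hr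
    obtain ⟨c, hc⟩ := hGdvd
    have heval : r ^ n - ((A : ℚ) : ℂ) = 0 := by
      have h := congrArg (Polynomial.eval r) hc
      simp only [Polynomial.eval_mul, Polynomial.eval_sub, Polynomial.eval_pow,
        Polynomial.eval_X, Polynomial.eval_C, hrr.eq_zero, zero_mul] at h
      exact h
    have hrn : r ^ n = ((A : ℚ) : ℂ) := sub_eq_zero.mp heval
    apply hroot_abs _ (norm_nonneg r)
    rw [← norm_pow, hrn, show ((A : ℚ) : ℂ) = (((A : ℚ) : ℝ) : ℂ) by norm_cast,
      Complex.norm_real, Real.norm_eq_abs, abs_of_pos hApos]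
  have habs0 : ‖G.coeff 0‖ = α ^ d := by
    have hGeq : G = (Multiset.map (fun r => X - C r) G.roots).prod :=
      hsplits.eq_prod_roots_of_monic hGmonic
    have hgen : ∀ (s : Multiset ℂ), (∀ r ∈ s, ‖r‖ = α) →
        ‖Polynomial.eval 0 (Multiset.map (fun r => X - C r) s).prod‖
          = α ^ Multiset.card s := by
      intro s
      induction s using Multiset.induction with
      | empty => intro _; simp
      | cons a s ih =>
        intro hs
        rw [Multiset.map_cons, Multiset.prod_cons, Polynomial.eval_mul, norm_mul,
          Multiset.card_cons, ih (fun r hr => hs r (Multiset.mem_cons_of_mem hr))]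
        have h1 : Polynomial.eval 0 (X - C a) = -a := by simp
        rw [h1, norm_neg, hs a (Multiset.mem_cons_self a s), pow_succ]
        ring
    rw [Polynomial.coeff_zero_eq_eval_zero]
    conv_lhs => rw [hGeq]
    rw [hgen G.roots habs_roots, hcard]
  set w : ↥GQ := g.coeff 0 with hwdef
  have hGw : G.coeff 0 = (w : ℂ) := by rw [hGdef, Polynomial.coeff_map]; rfl
  obtain ⟨wa, wb, hwab⟩ := mem_GQ.mp w.2
  have h2d : α ^ (2 * d) = ((wa ^ 2 + wb ^ 2 : ℚ) : ℝ) := by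
    have h1 : α ^ (2 * d) = ‖(w : ℂ)‖ ^ 2 := by
      rw [mul_comm, pow_mul, ← hGw, habs0]
    rw [h1, Complex.sq_norm, hwab,
      show (wa : ℂ) + (wb : ℂ) * Complex.I = ((wa : ℝ) : ℂ) + ((wb : ℝ) : ℂ) * Complex.I by
        push_cast; ring,
      Complex.normSq_add_mul_I]
    push_cast; ring
  set r₀ : ℚ := wa ^ 2 + wb ^ 2 with hr₀def
  have hr₀pos : 0 < r₀ := by
    have h : (0 : ℝ) < (r₀ : ℝ) := h2d ▸ pow_pos hαpos _
    exact_mod_cast h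
  -- gcd argument : n = 2 * d
  set e : ℕ := Nat.gcd (2 * d) n with hedef
  have hepos : 0 < e := Nat.gcd_pos_of_pos_right _ hnpos
  have he : ∃ B : ℚ, α ^ e = (B : ℝ) := by
    set u := Int.gcdA ((2 * d : ℕ) : ℤ) ((n : ℕ) : ℤ) with hu
    set v := Int.gcdB ((2 * d : ℕ) : ℤ) ((n : ℕ) : ℤ) with hv
    have hbez : (e : ℤ) = ((2 * d : ℕ) : ℤ) * u + ((n : ℕ) : ℤ) * v := by
      have h := Int.gcd_eq_gcd_ab ((2 * d : ℕ) : ℤ) ((n : ℕ) : ℤ)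
      rw [Int.gcd_natCast_natCast] at h
      exact h
    have hα0 : α ≠ 0 := hαpos.ne'
    refine ⟨r₀ ^ u * A ^ v, ?_⟩
    have hz : (α : ℝ) ^ (e : ℤ) = ((r₀ : ℝ)) ^ u * ((A : ℝ)) ^ v := by
      rw [hbez, zpow_add₀ hα0, zpow_mul, zpow_mul, zpow_natCast, zpow_natCast, h2d, hαn]
    rw [← zpow_natCast α e, hz]
    push_cast
    ring
  have h2dn : 2 * d = n := by
    have hen : e = n := by
      by_contra hne
      obtain ⟨B, hBe⟩ := he
      exact key e hepos (lt_of_le_of_ne (Nat.gcd_le_right _ hnpos) hne) B hBe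
    have hdvd2 : n ∣ 2 * d := by
      rw [← hen]
      exact Nat.gcd_dvd_left _ _
    obtain ⟨k, hk⟩ := hdvd2
    have hkk : k = 0 ∨ k = 1 ∨ 2 ≤ k := by omega
    rcases hkk with h | h | h
    · rw [h, Nat.mul_zero] at hk
      omega
    · rw [h, Nat.mul_one] at hk
      omega
    · exfalso
      have h2 : n * 2 ≤ n * k := Nat.mul_le_mul_left n h
      omega
  -- conjugation
  have hconjmem : ∀ x : ↥GQ, (starRingEnd ℂ) ((algebraMap ↥GQ ℂ) x) ∈ GQ := by
    rintro ⟨x, hx⟩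
    obtain ⟨a, b, rfl⟩ := mem_GQ.mp hx
    exact mem_GQ.mpr ⟨a, -b, conj_GQ_explicit a b⟩
  set σ : ↥GQ →+* ↥GQ :=
    RingHom.codRestrict ((starRingEnd ℂ).comp (algebraMap ↥GQ ℂ)) GQ hconjmem with hσdef
  have hσcoe : ∀ x : ↥GQ, ((σ x : ↥GQ) : ℂ) = (starRingEnd ℂ) (x : ℂ) := fun x => rfl
  set gbar : Polynomial ↥GQ := g.map σ with hgbardef
  have hgbmonic : gbar.Monic := hgmonic.map σ
  have hσa : σ a₀ = a₀ := by
    apply Subtype.ext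
    rw [hσcoe]
    show (starRingEnd ℂ) ((A : ℚ) : ℂ) = ((A : ℚ) : ℂ)
    rw [show ((A : ℚ) : ℂ) = (((A : ℚ) : ℝ) : ℂ) by norm_cast, Complex.conj_ofReal]
  have hgbdvd : gbar ∣ X ^ n - C a₀ := by
    have h := Polynomial.map_dvd σ hgdvd
    simpa [Polynomial.map_sub, hσa] using h
  have hgbdeg : gbar.natDegree = d := by
    rw [hgbardef, hddef]
    exact Polynomial.natDegree_map_eq_of_injective σ.injective g
  by_cases hgg : g = gbar
  · -- w is real, so α ^ d is rational : contradiction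
    have hww : (w : ℂ) = (starRingEnd ℂ) (w : ℂ) := by
      have h : g.coeff 0 = gbar.coeff 0 := by rw [← hgg]
      rw [hgbardef, Polynomial.coeff_map] at h
      have := congrArg (fun x : ↥GQ => (x : ℂ)) h
      simpa [hσcoe] using this
    have hwb : wb = 0 := by
      rw [hwab, conj_GQ_explicit wa wb] at hww
      have h1 : (wb : ℂ) * Complex.I = ((-wb : ℚ) : ℂ) * Complex.I := by
        have := add_left_cancel hww
        exact this
      have h2 : (wb : ℂ) = ((-wb : ℚ) : ℂ) :=
        mul_right_cancel₀ Complex.I_ne_zero h1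
      have h3 : wb = -wb := by exact_mod_cast h2
      linarith
    have hαd : α ^ d = ((|wa| : ℚ) : ℝ) := by
      rw [← habs0, hGw, hwab, hwb]
      have h1 : (wa : ℂ) + ((0 : ℚ) : ℂ) * Complex.I = (((wa : ℚ) : ℝ) : ℂ) := by
        push_cast; ring
      rw [h1, Complex.norm_real, Real.norm_eq_abs, Rat.cast_abs]
    exact key d hd1 hdQ |wa| hαd
  · -- g and gbar coprime ⇒ g * gbar = X^n - C a₀, contradiction at constant term
    have hgirr : Irreducible g := minpoly.irreducible hint
    have hcop : IsCoprime g gbar := by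
      rw [hgirr.coprime_iff_not_dvd]
      intro hdvd
      apply hgg
      obtain ⟨c, hc'⟩ := hdvd
      have hcne : c ≠ 0 := by
        rintro rfl
        rw [mul_zero] at hc'
        exact hgbmonic.ne_zero hc'
      have hdegc : c.natDegree = 0 := by
        have h := Polynomial.natDegree_mul hg0 hcne
        rw [← hc', hgbdeg] at h
        omega
      have hlc : (1 : ↥GQ) = c.leadingCoeff := by
        have h := congrArg Polynomial.leadingCoeff hc'
        rw [Polynomial.leadingCoeff_mul, hgmonic.leadingCoeff, hgbmonic.leadingCoeff,
          one_mul] at h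
        exact h
      have hc1 : c = 1 := by
        rw [Polynomial.eq_C_of_natDegree_eq_zero hdegc]
        have h : c.coeff 0 = 1 := by
          calc c.coeff 0 = c.coeff c.natDegree := by rw [hdegc]
            _ = c.leadingCoeff := rfl
            _ = 1 := hlc.symm
        rw [h, map_one]
      rw [hc', hc1, mul_one]
    have hmul_dvd : g * gbar ∣ X ^ n - C a₀ := hcop.mul_dvd hgdvd hgbdvd
    have hFmonic : (X ^ n - C a₀ : Polynomial ↥GQ).Monic := monic_X_pow_sub_C _ hnpos.ne'
    have hFdeg : (X ^ n - C a₀ : Polynomial ↥GQ).natDegree = n :=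
      Polynomial.natDegree_X_pow_sub_C
    obtain ⟨c, hc'⟩ := hmul_dvd
    have hcne : c ≠ 0 := by
      rintro rfl
      rw [mul_zero] at hc'
      exact hFmonic.ne_zero hc'
    have hmuldeg : (g * gbar).natDegree = n := by
      rw [Polynomial.natDegree_mul hg0 hgbmonic.ne_zero, hgbdeg, ← hddef]
      omega
    have hdegc : c.natDegree = 0 := by
      have h := Polynomial.natDegree_mul (mul_ne_zero hg0 hgbmonic.ne_zero) hcne
      rw [← hc', hFdeg, hmuldeg] at h
      omega
    have hc1 : c = 1 := by
      have hlc : (1 : ↥GQ) = c.leadingCoeff := by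
        have h := congrArg Polynomial.leadingCoeff hc'
        rw [Polynomial.leadingCoeff_mul, (hgmonic.mul hgbmonic).leadingCoeff,
          one_mul, hFmonic.leadingCoeff] at h
        exact h
      rw [Polynomial.eq_C_of_natDegree_eq_zero hdegc]
      have h : c.coeff 0 = 1 := by
        calc c.coeff 0 = c.coeff c.natDegree := by rw [hdegc]
          _ = c.leadingCoeff := rfl
          _ = 1 := hlc.symm
      rw [h, map_one]
    have hFeq : (X ^ n - C a₀ : Polynomial ↥GQ) = g * gbar := by
      rw [hc', hc1, mul_one]
    have hcoeff0 : (X ^ n - C a₀ : Polynomial ↥GQ).coeff 0 = -a₀ := by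
      rw [Polynomial.coeff_sub, Polynomial.coeff_X_pow, Polynomial.coeff_C_zero]
      have h0 : ¬ (0 : ℕ) = n := by omega
      simp [h0, hnpos.ne']
    have hprod : -a₀ = g.coeff 0 * gbar.coeff 0 := by
      rw [← hcoeff0, hFeq, Polynomial.mul_coeff_zero]
    have hgbar0 : gbar.coeff 0 = σ w := by rw [hgbardef, Polynomial.coeff_map, hwdef]
    have hC : -(((A : ℚ)) : ℂ) = (w : ℂ) * (starRingEnd ℂ) (w : ℂ) := by
      have h := congrArg (fun x : ↥GQ => (x : ℂ)) hprod
      simp only [hgbar0] at h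
      have h1 : ((-a₀ : ↥GQ) : ℂ) = -(((A : ℚ)) : ℂ) := rfl
      have h2 : ((g.coeff 0 * σ w : ↥GQ) : ℂ) = (w : ℂ) * ((σ w : ↥GQ) : ℂ) := rfl
      rw [h1, h2, hσcoe] at h
      exact h
    rw [Complex.mul_conj] at hC
    have hre : -(A : ℝ) = Complex.normSq (w : ℂ) := by
      have h := congrArg Complex.re hC
      simpa using h
    have := Complex.normSq_nonneg (w : ℂ)
    linarith
end

section
/- If A is a positive rational, n ≥ 2, and A^(1/n) is an irreducible radical, then the degree of A^(1/n) over ℚ (i.e., the degree of its minimal polynomial) is exactly n. -/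
open Polynomial

theorem stmt_17 (A : ℚ) (hA : 0 < A) (n : ℕ) (hn : 2 ≤ n)
    (hirr : IrredRad A n) :
    (minpoly ℚ ((A : ℝ) ^ ((1 : ℝ) / n))).natDegree = n := by
  set α : ℝ := (A : ℝ) ^ ((1 : ℝ) / n) with hα
  have hn0 : (n : ℝ) ≠ 0 := by positivity
  have hApos : (0:ℝ) < (A:ℝ) := by exact_mod_cast hA
  have hαpos : 0 < α := Real.rpow_pos_of_pos hApos _
  have hαn : α ^ n = (A : ℝ) := by
    rw [hα, ← Real.rpow_natCast (((A:ℝ)) ^ ((1:ℝ)/n)) n, ← Real.rpow_mul hApos.le]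
    field_simp
    simp
  -- α is a root of X^n - C A
  set p : ℚ[X] := X ^ n - C A with hp
  have hpne : p ≠ 0 := by
    have : p.natDegree = n := natDegree_X_pow_sub_C
    intro h; rw [h] at this; simp at this; omega
  have hproot : (aeval α) p = 0 := by
    simp [hp, hαn]
  have hint : IsIntegral ℚ α := by
    refine ⟨p, ?_, hproot⟩
    exact monic_X_pow_sub_C _ (by omega)
  set q : ℚ[X] := minpoly ℚ α with hq
  have hdvd : q ∣ p := minpoly.dvd ℚ α hproot
  set m : ℕ := q.natDegree with hm
  have hmn : m ≤ n := by
    have := Polynomial.natDegree_le_of_dvd hdvd hpne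
    simpa [hp, natDegree_X_pow_sub_C] using this
  have hm1 : 1 ≤ m := minpoly.natDegree_pos hint
  -- map to ℂ
  set qC : ℂ[X] := q.map (algebraMap ℚ ℂ) with hqC
  have hqCmonic : qC.Monic := (minpoly.monic hint).map _
  have hsplits : qC.Splits := IsAlgClosed.splits _
  have hroots : ∀ z ∈ qC.roots, ‖z‖ = α := by
    intro z hz
    have hz0 : qC.eval z = 0 := (mem_roots hqCmonic.ne_zero).1 hz
    have hdvdC : qC ∣ p.map (algebraMap ℚ ℂ) := Polynomial.map_dvd _ hdvd
    have hpz : (p.map (algebraMap ℚ ℂ)).eval z = 0 := by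
      obtain ⟨r, hr⟩ := hdvdC
      rw [hr]; simp [hz0]
    have hzn : z ^ n = (A : ℂ) := by
      have h2 : z ^ n - (A:ℂ) = 0 := by simpa [hp] using hpz
      exact sub_eq_zero.mp h2
    have habs : ‖z‖ ^ n = α ^ n := by
      rw [← norm_pow, hzn, hαn,
        show ((A:ℚ):ℂ) = (((A:ℚ):ℝ):ℂ) by norm_cast, Complex.norm_real, Real.norm_eq_abs,
        abs_of_pos hApos]
    exact (pow_left_inj₀ (norm_nonneg z) hαpos.le (by omega)).mp habs
  have hcard : Multiset.card qC.roots = m := by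
    rw [hm, ← (minpoly.monic hint).natDegree_map (algebraMap ℚ ℂ)]
    exact splits_iff_card_roots.mp hsplits
  -- product of roots
  have hprod : qC = (qC.roots.map fun z => X - C z).prod :=
    hsplits.eq_prod_roots_of_monic hqCmonic
  have heval0 : ‖qC.eval 0‖ = α ^ m := by
    rw [hprod, eval_multiset_prod, Multiset.map_map,
      ← normHom_apply, map_multiset_prod (normHom : ℂ →*₀ ℝ), Multiset.map_map]
    have hall : ∀ x ∈ qC.roots.map (⇑(normHom : ℂ →*₀ ℝ) ∘ eval 0 ∘ fun z => X - C z), x = α := by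
      intro x hx
      obtain ⟨z, hz, rfl⟩ := Multiset.mem_map.1 hx
      simp [Function.comp, hroots z hz]
    rw [Multiset.eq_replicate_card.2 hall, Multiset.prod_replicate, Multiset.card_map, hcard]
  have hqeval : qC.eval 0 = ((q.eval 0 : ℚ) : ℂ) := by
    rw [hqC, eval_map]
    simp [eval₂_at_zero]
    exact (coeff_zero_eq_eval_zero q)
  have hB : α ^ m = ((|q.eval 0| : ℚ) : ℝ) := by
    rw [← heval0, hqeval,
      show ((q.eval 0:ℚ):ℂ) = (((q.eval 0 : ℚ):ℝ):ℂ) by norm_cast, Complex.norm_real, Real.norm_eq_abs]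
    push_cast
    ring
  set B : ℚ := |q.eval 0| with hBdef
  have hBpos : 0 < B := by
    by_contra h
    push_neg at h
    have : (B:ℝ) ≤ 0 := by exact_mod_cast h
    have := pow_pos hαpos m
    rw [hB] at this
    linarith
  have hαB : α = (B : ℝ) ^ ((1:ℝ)/m) := by
    have hm0 : (m:ℝ) ≠ 0 := by positivity
    rw [← hB, ← Real.rpow_natCast α m, ← Real.rpow_mul hαpos.le]
    field_simp
    simp
  by_contra hne
  have hmlt : m < n := lt_of_le_of_ne hmn hne
  exact hirr ⟨m, B, hm1, hmlt, hBpos, hαB⟩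
end
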